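/- arXiv:math/0607552 — 6 statements merged into one kernel-verified Lean document; each statement's English description precedes it below -/
import Mathlib

section
/- Let N ≥ 3 and let g : [0,∞) → [0,∞) be continuous. Then for every r > 0, ∫₀^r e^{-t} t^{1-N} ( ∫₀^t e^s s^{N-1} g(s) ds ) dt ≤ (1/(N-2)) ∫₀^r t g(t) dt. -/
open Set Filter MeasureTheory Topology

theorem stmt4 {N : ℕ} (hN : 3 ≤ N) (g : ℝ → ℝ)
    (hgc : ContinuousOn g (Ici 0)) (hg0 : ∀ t ∈ Ici (0 : ℝ), 0 ≤ g t) :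
    ∀ r > (0 : ℝ),
      (∫ t in Ioc (0:ℝ) r, Real.exp (-t) * t ^ (1 - (N : ℝ)) *
          ∫ s in Ioc (0:ℝ) t, Real.exp s * s ^ ((N : ℝ) - 1) * g s)
        ≤ (1 / ((N : ℝ) - 2)) * ∫ t in Ioc (0:ℝ) r, t * g t := by
  intro r hr
  have hN3 : (3:ℝ) ≤ (N:ℝ) := by exact_mod_cast hN
  have hc : (0:ℝ) < (N:ℝ) - 2 := by linarith
  have hp0 : (0:ℝ) ≤ (N:ℝ) - 1 := by linarith
  -- the function h s = s^(N-1) g s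
  set h : ℝ → ℝ := fun s => s ^ ((N:ℝ) - 1) * g s with hh
  have hrpowc : Continuous fun s : ℝ => s ^ ((N:ℝ) - 1) :=
    continuous_iff_continuousAt.2 fun x => Real.continuousAt_rpow_const x _ (Or.inr hp0)
  have hhc : ContinuousOn h (Ici 0) := hrpowc.continuousOn.mul hgc
  have hh0 : ∀ s ∈ Ici (0:ℝ), 0 ≤ h s := fun s hs =>
    mul_nonneg (Real.rpow_nonneg hs _) (hg0 s hs)
  have hhint : ∀ t : ℝ, 0 ≤ t → IntegrableOn h (Ioc 0 t) := fun t ht =>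
    ((hhc.mono (Icc_subset_Ici_self : Icc (0:ℝ) t ⊆ Ici 0)).integrableOn_Icc).mono_set
      Ioc_subset_Icc_self
  have hhii : ∀ t : ℝ, 0 ≤ t → IntervalIntegrable h volume 0 t := fun t ht => by
    rw [intervalIntegrable_iff_integrableOn_Ioc_of_le ht]; exact hhint t ht
  set B : ℝ → ℝ := fun t => ∫ s in (0:ℝ)..t, h s with hB
  have hBeq : ∀ t : ℝ, 0 ≤ t → B t = ∫ s in Ioc (0:ℝ) t, h s := fun t ht =>
    intervalIntegral.integral_of_le ht
  have hB0 : ∀ t : ℝ, 0 ≤ t → 0 ≤ B t := fun t ht => by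
    rw [hBeq t ht]
    exact setIntegral_nonneg measurableSet_Ioc fun s hs => hh0 s hs.1.le
  have hBderiv : ∀ u : ℝ, 0 < u → HasDerivAt B (h u) u := fun u hu =>
    intervalIntegral.integral_hasDerivAt_right (hhii u hu.le)
      (ContinuousOn.stronglyMeasurableAtFilter isOpen_Ioi
        (hhc.mono Ioi_subset_Ici_self) u hu)
      (hhc.continuousAt (mem_of_superset (isOpen_Ioi.mem_nhds hu) Ioi_subset_Ici_self))
  -- bound for g
  obtain ⟨M, hM⟩ := isCompact_Icc.exists_bound_of_continuousOn
    (hgc.mono (Icc_subset_Ici_self : Icc (0:ℝ) r ⊆ Ici 0))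
  have hM0 : 0 ≤ M := le_trans (norm_nonneg _) (hM 0 ⟨le_refl _, hr.le⟩)
  have hgle : ∀ s ∈ Icc (0:ℝ) r, g s ≤ M := fun s hs =>
    le_trans (le_abs_self _) (by simpa [Real.norm_eq_abs] using hM s hs)
  -- B t ≤ (M * t^(N-1)) * t  for t ∈ Ioc 0 r
  have hBle : ∀ t ∈ Ioc (0:ℝ) r, B t ≤ M * t ^ ((N:ℝ) - 1) * t := by
    intro t ht
    rw [hBeq t ht.1.le]
    have hconst : IntegrableOn (fun _ : ℝ => M * t ^ ((N:ℝ) - 1)) (Ioc 0 t) :=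
      integrableOn_const measure_Ioc_lt_top.ne
    calc (∫ s in Ioc (0:ℝ) t, h s)
        ≤ ∫ _ in Ioc (0:ℝ) t, M * t ^ ((N:ℝ) - 1) := by
          apply setIntegral_mono_on (hhint t ht.1.le) hconst measurableSet_Ioc
          intro s hs
          have hs0 : (0:ℝ) ≤ s := hs.1.le
          have h1 : s ^ ((N:ℝ) - 1) ≤ t ^ ((N:ℝ) - 1) :=
            Real.rpow_le_rpow hs0 hs.2 hp0
          have h2 : g s ≤ M := hgle s ⟨hs0, hs.2.trans ht.2⟩
          calc h s = s ^ ((N:ℝ) - 1) * g s := rfl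
            _ ≤ t ^ ((N:ℝ) - 1) * M :=
              mul_le_mul h1 h2 (hg0 s hs0) (Real.rpow_nonneg ht.1.le _)
            _ = M * t ^ ((N:ℝ) - 1) := by ring
      _ = M * t ^ ((N:ℝ) - 1) * t := by
          rw [setIntegral_const, measureReal_def, Real.volume_Ioc, smul_eq_mul]
          rw [ENNReal.toReal_ofReal (by linarith [ht.1])]
          ring
  -- φ
  set φ : ℝ → ℝ := fun t => t ^ (1 - (N:ℝ)) * B t with hφ
  have hφ0 : ∀ t : ℝ, 0 < t → 0 ≤ φ t := fun t ht =>
    mul_nonneg (Real.rpow_nonneg ht.le _) (hB0 t ht.le)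
  have hone : ∀ t : ℝ, 0 < t → t ^ (1 - (N:ℝ)) * t ^ ((N:ℝ) - 1) = 1 := by
    intro t ht
    rw [← Real.rpow_add ht, show (1 - (N:ℝ)) + ((N:ℝ) - 1) = 0 by ring, Real.rpow_zero]
  have hφle : ∀ t ∈ Ioc (0:ℝ) r, φ t ≤ M * t := by
    intro t ht
    have := mul_le_mul_of_nonneg_left (hBle t ht) (Real.rpow_nonneg ht.1.le (1 - (N:ℝ)))
    calc φ t ≤ t ^ (1 - (N:ℝ)) * (M * t ^ ((N:ℝ) - 1) * t) := this
      _ = M * (t ^ (1 - (N:ℝ)) * t ^ ((N:ℝ) - 1)) * t := by ring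
      _ = M * t := by rw [hone t ht.1]; ring
  have hφca : ∀ u : ℝ, 0 < u → ContinuousAt φ u := fun u hu =>
    ((Real.continuousAt_rpow_const u _ (Or.inl hu.ne')).mul (hBderiv u hu).continuousAt)
  have hφcont : ContinuousOn φ (Ioc 0 r) := fun u hu =>
    (hφca u hu.1).continuousWithinAt
  have hφmeas : AEStronglyMeasurable φ (volume.restrict (Ioc (0:ℝ) r)) :=
    hφcont.aestronglyMeasurable measurableSet_Ioc
  have hφint : IntegrableOn φ (Ioc (0:ℝ) r) := by
    apply Integrable.mono' (g := fun _ : ℝ => M * r)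
      (integrableOn_const measure_Ioc_lt_top.ne) hφmeas
    rw [ae_restrict_iff' measurableSet_Ioc]
    refine ae_of_all _ fun t ht => ?_
    rw [Real.norm_eq_abs, abs_of_nonneg (hφ0 t ht.1)]
    exact (hφle t ht).trans (mul_le_mul_of_nonneg_left ht.2 hM0)
  -- Step 1 : LHS ≤ ∫ φ
  have step1 : (∫ t in Ioc (0:ℝ) r, Real.exp (-t) * t ^ (1 - (N : ℝ)) *
      ∫ s in Ioc (0:ℝ) t, Real.exp s * s ^ ((N : ℝ) - 1) * g s)
      ≤ ∫ t in Ioc (0:ℝ) r, φ t := by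
    apply integral_mono_of_nonneg _ hφint
    · filter_upwards [ae_restrict_mem measurableSet_Ioc] with t ht
      -- pointwise comparison
      have hI : Real.exp (-t) * ∫ s in Ioc (0:ℝ) t, Real.exp s * s ^ ((N : ℝ) - 1) * g s
          ≤ B t := by
        rw [hBeq t ht.1.le, ← integral_const_mul]
        apply integral_mono_of_nonneg _ ((hhint t ht.1.le))
        · filter_upwards [ae_restrict_mem measurableSet_Ioc] with s hs
          have he : Real.exp (-t) * Real.exp s ≤ 1 := by
            rw [← Real.exp_add]
            exact Real.exp_le_one_iff.2 (by linarith [hs.2])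
          calc Real.exp (-t) * (Real.exp s * s ^ ((N:ℝ) - 1) * g s)
              = (Real.exp (-t) * Real.exp s) * (s ^ ((N:ℝ) - 1) * g s) := by ring
            _ ≤ 1 * (s ^ ((N:ℝ) - 1) * g s) :=
                mul_le_mul_of_nonneg_right he (hh0 s hs.1.le)
            _ = h s := by rw [one_mul]
        · filter_upwards [ae_restrict_mem measurableSet_Ioc] with s hs
          have := Real.exp_pos s
          have := Real.rpow_nonneg hs.1.le ((N:ℝ) - 1)
          have := hg0 s hs.1.le
          positivity
      calc Real.exp (-t) * t ^ (1 - (N:ℝ)) *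
            ∫ s in Ioc (0:ℝ) t, Real.exp s * s ^ ((N : ℝ) - 1) * g s
          = t ^ (1 - (N:ℝ)) *
            (Real.exp (-t) * ∫ s in Ioc (0:ℝ) t, Real.exp s * s ^ ((N : ℝ) - 1) * g s) := by
            ring
        _ ≤ t ^ (1 - (N:ℝ)) * B t :=
            mul_le_mul_of_nonneg_left hI (Real.rpow_nonneg ht.1.le _)
        _ = φ t := rfl
    · filter_upwards [ae_restrict_mem measurableSet_Ioc] with t ht
      have h1 : (0:ℝ) < Real.exp (-t) := Real.exp_pos _
      have h2 : (0:ℝ) ≤ t ^ (1 - (N:ℝ)) := Real.rpow_nonneg ht.1.le _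
      have h3 : (0:ℝ) ≤ ∫ s in Ioc (0:ℝ) t, Real.exp s * s ^ ((N : ℝ) - 1) * g s := by
        apply setIntegral_nonneg measurableSet_Ioc
        intro s hs
        have := (Real.exp_pos s).le
        have := Real.rpow_nonneg hs.1.le ((N:ℝ) - 1)
        have := hg0 s hs.1.le
        positivity
      positivity
  -- A and Φ
  set A : ℝ → ℝ := fun u => ∫ t in (0:ℝ)..u, t * g t with hA
  have htgc : ContinuousOn (fun t : ℝ => t * g t) (Ici 0) := continuousOn_id.mul hgc
  have hAii : ∀ u : ℝ, 0 ≤ u → IntervalIntegrable (fun t : ℝ => t * g t) volume 0 u :=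
    fun u hu => (htgc.mono (by rw [uIcc_of_le hu]; exact Icc_subset_Ici_self)).intervalIntegrable
  have hA0 : ∀ u : ℝ, 0 ≤ u → 0 ≤ A u := fun u hu => by
    have hAu : A u = ∫ t in Ioc (0:ℝ) u, t * g t := intervalIntegral.integral_of_le hu
    rw [hAu]
    exact setIntegral_nonneg measurableSet_Ioc fun t ht =>
      mul_nonneg ht.1.le (hg0 t ht.1.le)
  have hAderiv : ∀ u : ℝ, 0 < u → HasDerivAt A (u * g u) u := fun u hu =>
    intervalIntegral.integral_hasDerivAt_right (hAii u hu.le)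
      (ContinuousOn.stronglyMeasurableAtFilter isOpen_Ioi
        (htgc.mono Ioi_subset_Ici_self) u hu)
      (htgc.continuousAt (mem_of_superset (isOpen_Ioi.mem_nhds hu) Ioi_subset_Ici_self))
  set Φ : ℝ → ℝ := fun u => (1 / ((N:ℝ) - 2)) * (A u - u ^ (2 - (N:ℝ)) * B u) with hΦ
  have hΦderiv : ∀ u : ℝ, 0 < u → HasDerivAt Φ (φ u) u := by
    intro u hu
    have hrp : HasDerivAt (fun u : ℝ => u ^ (2 - (N:ℝ)))
        ((2 - (N:ℝ)) * u ^ ((2 - (N:ℝ)) - 1)) u :=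
      Real.hasDerivAt_rpow_const (Or.inl hu.ne')
    have hd := ((hAderiv u hu).sub ((hrp.mul (hBderiv u hu)))).const_mul (1 / ((N:ℝ) - 2))
    convert hd using 1
    case e'_4 => rfl
    case e'_5 => rfl
    case e'_8 => rfl
    have e1 : u ^ ((2:ℝ) - (N:ℝ)) * h u = u * g u := by
      rw [hh]
      show u ^ ((2:ℝ) - (N:ℝ)) * (u ^ ((N:ℝ) - 1) * g u) = u * g u
      rw [← mul_assoc, ← Real.rpow_add hu,
        show (2 - (N:ℝ)) + ((N:ℝ) - 1) = 1 by ring, Real.rpow_one]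
    have e2 : u ^ ((2 - (N:ℝ)) - 1) = u ^ (1 - (N:ℝ)) := by
      congr 1; ring
    rw [e2]
    show φ u = 1 / ((N:ℝ) - 2) *
      (u * g u - ((2 - (N:ℝ)) * u ^ (1 - (N:ℝ)) * B u + u ^ (2 - (N:ℝ)) * h u))
    rw [e1, hφ]
    field_simp
    ring
  -- key inequality for each ε ∈ (0, r]
  have key : ∀ ε : ℝ, 0 < ε → ε ≤ r →
      (∫ t in Ioc ε r, φ t) ≤ (1 / ((N:ℝ) - 2)) * A r + (1 / ((N:ℝ) - 2)) * (M * (ε * ε)) := by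
    intro ε hε hεr
    have hsub : Icc ε r ⊆ Ioi 0 := fun x hx => lt_of_lt_of_le hε hx.1
    have hφii : IntervalIntegrable φ volume ε r := by
      apply ContinuousOn.intervalIntegrable
      rw [uIcc_of_le hεr]
      exact fun u hu => (hφca u (hsub hu)).continuousWithinAt
    have hftc : (∫ u in ε..r, φ u) = Φ r - Φ ε := by
      apply intervalIntegral.integral_eq_sub_of_hasDerivAt _ hφii
      intro u hu
      rw [uIcc_of_le hεr] at hu
      exact hΦderiv u (hsub hu)
    have hBε : ε ^ (2 - (N:ℝ)) * B ε ≤ M * (ε * ε) := by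
      have h1 := mul_le_mul_of_nonneg_left (hBle ε ⟨hε, hεr⟩)
        (Real.rpow_nonneg hε.le (2 - (N:ℝ)))
      calc ε ^ (2 - (N:ℝ)) * B ε ≤ ε ^ (2 - (N:ℝ)) * (M * ε ^ ((N:ℝ) - 1) * ε) := h1
        _ = M * (ε ^ (2 - (N:ℝ)) * ε ^ ((N:ℝ) - 1)) * ε := by ring
        _ = M * (ε * ε) := by
            rw [← Real.rpow_add hε, show (2 - (N:ℝ)) + ((N:ℝ) - 1) = 1 by ring,
              Real.rpow_one]; ring
    have hc' : (0:ℝ) < 1 / ((N:ℝ) - 2) := by positivity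
    rw [← intervalIntegral.integral_of_le hεr, hftc, hΦ]
    have hb1 : (0:ℝ) ≤ r ^ (2 - (N:ℝ)) * B r :=
      mul_nonneg (Real.rpow_nonneg hr.le _) (hB0 r hr.le)
    have hb2 : (0:ℝ) ≤ A ε := hA0 ε hε.le
    have := hBε
    nlinarith [mul_le_mul_of_nonneg_left hBε hc'.le,
      mul_le_mul_of_nonneg_left hb1 hc'.le, mul_le_mul_of_nonneg_left hb2 hc'.le]
  -- limit ε → 0 along εₙ = r / (n+1)
  set e : ℕ → ℝ := fun n => r / (n + 1) with he
  have he0 : ∀ n, 0 < e n := fun n => by positivity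
  have her : ∀ n, e n ≤ r := fun n => by
    rw [he]
    rw [div_le_iff₀ (by positivity)]
    nlinarith [Nat.cast_nonneg (α := ℝ) n, hr]
  have hmono : Monotone fun n => Ioc (e n) r := by
    intro n m hnm
    apply Ioc_subset_Ioc_left
    have hnm' : ((n:ℝ)) ≤ (m:ℝ) := Nat.cast_le.2 hnm
    simp only [he]
    gcongr
  have hunion : (⋃ n, Ioc (e n) r) = Ioc (0:ℝ) r := by
    ext x
    simp only [mem_iUnion, mem_Ioc]
    constructor
    · rintro ⟨n, h1, h2⟩
      exact ⟨lt_trans (he0 n) h1, h2⟩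
    · rintro ⟨hx0, hxr⟩
      obtain ⟨n, hn⟩ := exists_nat_gt (r / x)
      refine ⟨n, ?_, hxr⟩
      rw [he, div_lt_iff₀ (by positivity)]
      rw [div_lt_iff₀ hx0] at hn
      nlinarith
  have htend1 : Tendsto (fun n => ∫ t in Ioc (e n) r, φ t) atTop
      (𝓝 (∫ t in Ioc (0:ℝ) r, φ t)) := by
    have := tendsto_setIntegral_of_monotone (fun n => measurableSet_Ioc) hmono
      (by rw [hunion]; exact hφint)
    rwa [hunion] at this
  have hetend : Tendsto e atTop (𝓝 0) := by
    rw [he]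
    apply Tendsto.div_atTop tendsto_const_nhds
    exact tendsto_atTop_add_const_right atTop 1 tendsto_natCast_atTop_atTop
  have htend2 : Tendsto (fun n => (1 / ((N:ℝ) - 2)) * A r +
      (1 / ((N:ℝ) - 2)) * (M * (e n * e n))) atTop (𝓝 ((1 / ((N:ℝ) - 2)) * A r)) := by
    have : Tendsto (fun n => (1 / ((N:ℝ) - 2)) * (M * (e n * e n))) atTop (𝓝 0) := by
      have h2 := (hetend.mul hetend)
      rw [mul_zero] at h2
      have := (tendsto_const_nhds (x := M) (f := atTop (α := ℕ))).mul h2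
      rw [mul_zero] at this
      have := (tendsto_const_nhds (x := 1 / ((N:ℝ) - 2)) (f := atTop (α := ℕ))).mul this
      rwa [mul_zero] at this
    have := (tendsto_const_nhds (x := (1 / ((N:ℝ) - 2)) * A r) (f := atTop (α := ℕ))).add this
    rwa [add_zero] at this
  have step2 : (∫ t in Ioc (0:ℝ) r, φ t) ≤ (1 / ((N:ℝ) - 2)) * A r :=
    le_of_tendsto_of_tendsto' htend1 htend2 fun n => key (e n) (he0 n) (her n)
  have hAr : A r = ∫ t in Ioc (0:ℝ) r, t * g t := intervalIntegral.integral_of_le hr.le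
  calc (∫ t in Ioc (0:ℝ) r, Real.exp (-t) * t ^ (1 - (N : ℝ)) *
        ∫ s in Ioc (0:ℝ) t, Real.exp s * s ^ ((N : ℝ) - 1) * g s)
      ≤ ∫ t in Ioc (0:ℝ) r, φ t := step1
    _ ≤ (1 / ((N:ℝ) - 2)) * A r := step2
    _ = (1 / ((N:ℝ) - 2)) * ∫ t in Ioc (0:ℝ) r, t * g t := by rw [hAr]
end

section
/- Let N ≥ 3 and let Ω ⊂ ℝ^N be a bounded domain with smooth boundary. Let p ∈ C^{0,α}(cl Ω) be nonnegative, and let f ∈ C^{0,α}_loc[0,∞) be nondecreasing with f(0) = 0, f > 0 on (0,∞), and Λ := sup_{s ≥ 1} f(s)/s < ∞. Then the problem Δu + |∇u| = p(x) f(u) in Ω, u ≥ 0 in Ω, has no positive large solution: there is no positive u ∈ C²(Ω) satisfying the equation in Ω with u(x) → +∞ as dist(x, ∂Ω) → 0. -/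
open Set Filter MeasureTheory Metric Topology

noncomputable section

abbrev Euc (N : ℕ) := EuclideanSpace ℝ (Fin N)

/-- The Laplace operator, as the sum of the pure second partial derivatives. -/
noncomputable def lap {N : ℕ} (u : Euc N → ℝ) (x : Euc N) : ℝ :=
  ∑ i : Fin N, iteratedFDeriv ℝ 2 u x
    ![EuclideanSpace.single i (1 : ℝ), EuclideanSpace.single i (1 : ℝ)]

/-- An open set has smooth boundary if near each boundary point it is the strict sublevel
set of a smooth local defining function with nonvanishing differential. -/
def SmoothBoundary {N : ℕ} (Ω : Set (Euc N)) : Prop :=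
  ∀ x ∈ frontier Ω, ∃ (U : Set (Euc N)) (f : Euc N → ℝ),
    IsOpen U ∧ x ∈ U ∧ ContDiff ℝ (⊤ : ℕ∞) f ∧ (∀ y ∈ U, (y ∈ Ω ↔ f y < 0)) ∧
    ∀ y ∈ U, fderiv ℝ f y ≠ 0

section Helpers

lemma secondDeriv_test {φ : ℝ → ℝ} {I : Set ℝ} (hI : IsOpen I) (h0 : (0:ℝ) ∈ I)
    (hφ : ContDiffOn ℝ 2 φ I) (hmin : IsLocalMin φ 0) : 0 ≤ deriv (deriv φ) 0 := by
  by_contra hD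
  push_neg at hD
  have hd1 : ContDiffOn ℝ 1 (deriv φ) I := hφ.deriv_of_isOpen hI (by norm_num)
  have hdiff : DifferentiableAt ℝ (deriv φ) 0 :=
    (hd1.contDiffAt (hI.mem_nhds h0)).differentiableAt one_ne_zero
  have h0' : deriv φ 0 = 0 := hmin.deriv_eq_zero
  have hDer : HasDerivAt (deriv φ) (deriv (deriv φ) 0) 0 := hdiff.hasDerivAt
  rw [hasDerivAt_iff_tendsto_slope] at hDer
  have hslope : ∀ᶠ t in 𝓝[>] (0:ℝ), slope (deriv φ) 0 t < 0 :=
    (hDer.mono_left (nhdsWithin_mono _ (by intro t ht; exact ne_of_gt ht))).eventually_lt_const hD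
  have hneg : ∀ᶠ t in 𝓝[>] (0:ℝ), deriv φ t < 0 := by
    filter_upwards [hslope, self_mem_nhdsWithin] with t ht ht0
    have : (deriv φ t - deriv φ 0) / (t - 0) < 0 := by
      simpa [slope_def_field, div_eq_iff] using ht
    rw [h0', sub_zero, sub_zero] at this
    rcases div_neg_iff.1 this with h | h
    · exact absurd (mem_Ioi.1 ht0) (not_lt.2 h.2.le)
    · exact h.1
  obtain ⟨b, hb0, hb⟩ := mem_nhdsGT_iff_exists_Ioo_subset.1 hneg
  have hev : ∀ᶠ t in 𝓝 (0:ℝ), t ∈ I ∧ φ 0 ≤ φ t :=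
    Filter.Eventually.and (hI.eventually_mem h0) hmin
  obtain ⟨a, ha0, ha⟩ := Metric.eventually_nhds_iff_ball.1 hev
  set c := min (b/2) (a/2) with hc
  have hc0 : 0 < c := lt_min (by linarith [mem_Ioi.1 hb0]) (by linarith)
  have hca : c < a := lt_of_le_of_lt (min_le_right _ _) (by linarith)
  have hcb : c < b := lt_of_le_of_lt (min_le_left _ _) (by linarith [mem_Ioi.1 hb0])
  have hIcc : Icc (0:ℝ) c ⊆ I := by
    intro t ht
    exact (ha t (by simp [abs_of_nonneg ht.1]; linarith [ht.2])).1
  have hanti : StrictAntiOn φ (Icc 0 c) := by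
    apply strictAntiOn_of_deriv_neg (convex_Icc 0 c) (hφ.continuousOn.mono hIcc)
    intro t ht
    rw [interior_Icc] at ht
    exact hb ⟨ht.1, ht.2.trans hcb⟩
  have h1 : φ c < φ 0 := hanti (left_mem_Icc.2 hc0.le) (right_mem_Icc.2 hc0.le) hc0
  have h2 : φ 0 ≤ φ c := (ha c (by simp [abs_of_pos hc0]; linarith)).2
  linarith

variable {E : Type*} [NormedAddCommGroup E] [NormedSpace ℝ E]
    {u : E → ℝ} {Ω : Set E} {x0 : E}

lemma lineMap_hasDerivAt (x0 e : E) (t : ℝ) :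
    HasDerivAt (fun s : ℝ => x0 + s • e) e t := by
  simpa using ((hasDerivAt_id t).smul_const e).const_add x0

lemma lineDeriv1 (hΩo : IsOpen Ω) (hu : ContDiffOn ℝ 2 u Ω) (e : E) {t : ℝ}
    (ht : x0 + t • e ∈ Ω) :
    HasDerivAt (fun s : ℝ => u (x0 + s • e)) (fderiv ℝ u (x0 + t • e) e) t := by
  have hdu : DifferentiableAt ℝ u (x0 + t • e) :=
    (hu.contDiffAt (hΩo.mem_nhds ht)).differentiableAt (by norm_num)
  exact hdu.hasFDerivAt.comp_hasDerivAt t (lineMap_hasDerivAt x0 e t)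

lemma lineDeriv2 (hΩo : IsOpen Ω) (hu : ContDiffOn ℝ 2 u Ω) (hx0 : x0 ∈ Ω) (e : E) :
    HasDerivAt (fun t : ℝ => fderiv ℝ u (x0 + t • e) e) (fderiv ℝ (fderiv ℝ u) x0 e e) 0 := by
  have h2 : DifferentiableAt ℝ (fderiv ℝ u) x0 :=
    ((hu.contDiffAt (hΩo.mem_nhds hx0)).fderiv_right (m := 1) one_add_one_eq_two.le).differentiableAt one_ne_zero
  have hc : HasDerivAt (fun t : ℝ => fderiv ℝ u (x0 + t • e)) (fderiv ℝ (fderiv ℝ u) x0 e) 0 := by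
    have h2' : HasFDerivAt (fderiv ℝ u) (fderiv ℝ (fderiv ℝ u) x0) (x0 + (0:ℝ) • e) := by
      simpa using h2.hasFDerivAt
    have := h2'.comp_hasDerivAt 0 (lineMap_hasDerivAt x0 e 0)
    exact this
  simpa using hc.clm_apply (hasDerivAt_const 0 e)

end Helpers

theorem stmt5 {N : ℕ} (hN : 3 ≤ N) (Ω : Set (Euc N))
    (hΩo : IsOpen Ω) (hΩconn : IsConnected Ω) (hΩbd : Bornology.IsBounded Ω)
    (hΩsm : SmoothBoundary Ω)
    (α β : NNReal) (hα0 : 0 < α) (hα1 : α < 1) (hβ0 : 0 < β) (hβ1 : β < 1)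
    (p : Euc N → ℝ) (hpH : ∃ C, HolderOnWith C α p (closure Ω))
    (hp0 : ∀ x ∈ closure Ω, 0 ≤ p x)
    (f : ℝ → ℝ)
    (hfH : ∀ K ⊆ Ici (0 : ℝ), IsCompact K → ∃ C, HolderOnWith C β f K)
    (hfmono : MonotoneOn f (Ici 0)) (hf0 : f 0 = 0) (hfpos : ∀ s > (0 : ℝ), 0 < f s)
    (Λ : ℝ) (hΛ : ∀ s ≥ (1 : ℝ), f s / s ≤ Λ) :
    ¬ ∃ u : Euc N → ℝ, ContDiffOn ℝ 2 u Ω ∧ (∀ x ∈ Ω, 0 < u x) ∧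
      (∀ x ∈ Ω, lap u x + ‖gradient u x‖ = p x * f (u x)) ∧
      (∀ M : ℝ, ∃ δ > (0:ℝ), ∀ x ∈ Ω, infDist x (frontier Ω) < δ → M ≤ u x) := by
  rintro ⟨u, hu, hupos, hpde, hblow⟩
  obtain ⟨z, hz⟩ := hΩconn.nonempty
  have hN3 : (3:ℝ) ≤ (N:ℝ) := by exact_mod_cast hN
  have hNpos : 0 < (N : ℝ) := by linarith
  -- compactness of the closure and bound for p
  have hclK : IsCompact (closure Ω) := hΩbd.isCompact_closure
  obtain ⟨Cp, hpHol⟩ := hpH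
  have hpcont : ContinuousOn p (closure Ω) := hpHol.continuousOn hα0
  obtain ⟨w, hw, hwmax⟩ := hclK.exists_isMaxOn ⟨z, subset_closure hz⟩ hpcont
  set c₀ : ℝ := p w with hc₀
  have hc₀0 : 0 ≤ c₀ := hp0 w hw
  -- Λ is positive and f s ≤ Λ (1 + s) for s ≥ 0
  have hΛ1 : f 1 ≤ Λ := by simpa using hΛ 1 le_rfl
  have hΛpos : 0 < Λ := lt_of_lt_of_le (hfpos 1 one_pos) hΛ1
  have hflin : ∀ s : ℝ, 0 ≤ s → f s ≤ Λ * (1 + s) := by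
    intro s hs
    rcases le_or_gt s 1 with h1 | h1
    · have : f s ≤ f 1 := hfmono hs (by norm_num) h1
      nlinarith
    · have : f s ≤ Λ * s := by
        have := hΛ s h1.le
        rw [div_le_iff₀ (by linarith)] at this
        exact this
      nlinarith
  set c : ℝ := c₀ * Λ with hc
  have hc0 : 0 ≤ c := mul_nonneg hc₀0 hΛpos.le
  have hkey : ∀ x ∈ Ω, p x * f (u x) ≤ c * (1 + u x) := by
    intro x hx
    have hpx : p x ≤ c₀ := hwmax (subset_closure hx)
    have hpx0 : 0 ≤ p x := hp0 x (subset_closure hx)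
    have hux : 0 < u x := hupos x hx
    have hf1 : f (u x) ≤ Λ * (1 + u x) := hflin _ hux.le
    have hf0' : 0 ≤ f (u x) := by
      have := hfmono (le_refl (0:ℝ)) hux.le hux.le
      rw [hf0] at this; exact this
    nlinarith
  set A : ℝ := (c + 1) / (2 * N) with hA
  have hApos : 0 < A := by positivity
  have h2NA : 2 * (N:ℝ) * A = c + 1 := by rw [hA, mul_div_assoc', mul_div_cancel_left₀ _ (by positivity)]
  obtain ⟨R, hR⟩ := hΩbd.exists_norm_le
  have hR0 : 0 ≤ R := (norm_nonneg z).trans (hR z hz)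
  -- the auxiliary function v
  set v : Euc N → ℝ := fun x => Real.log (1 + u x) - A * ‖x‖ ^ 2 with hv
  have hvcont : ContinuousOn v Ω := by
    apply ContinuousOn.sub
    · apply ContinuousOn.log (continuousOn_const.add hu.continuousOn)
      intro x hx
      have := hupos x hx; exact ne_of_gt (show (0:ℝ) < 1 + u x by linarith)
    · exact (continuous_const.mul ((continuous_norm).pow 2)).continuousOn
  -- frontier is nonempty
  have hFne : (frontier Ω).Nonempty := by
    rw [nonempty_frontier_iff]
    refine ⟨⟨z, hz⟩, ?_⟩
    intro h
    have hnt : Nontrivial (Euc N) := by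
      refine ⟨0, EuclideanSpace.single (⟨0, by omega⟩ : Fin N) (1:ℝ), ?_⟩
      intro h'
      have := congrArg norm h'
      simp [EuclideanSpace.norm_single] at this
    exact NormedSpace.unbounded_univ ℝ (Euc N) (h ▸ hΩbd)
  have hFclosed : IsClosed (frontier Ω) := isClosed_frontier
  have hzF : 0 < infDist z (frontier Ω) := by
    rw [← hFclosed.notMem_iff_infDist_pos hFne]
    intro hzf
    rw [hΩo.frontier_eq] at hzf
    exact hzf.2 hz
  -- boundary blow-up for v and existence of interior minimum
  obtain ⟨δ, hδ0, hδ⟩ := hblow (Real.exp (v z + A * R ^ 2))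
  set δ' : ℝ := min δ (infDist z (frontier Ω)) with hδ'
  have hδ'0 : 0 < δ' := lt_min hδ0 hzF
  set K : Set (Euc N) := closure Ω ∩ {x | δ' ≤ infDist x (frontier Ω)} with hK
  have hKcpt : IsCompact K :=
    hclK.inter_right (isClosed_le continuous_const (continuous_infDist_pt _))
  have hKΩ : K ⊆ Ω := by
    rintro x ⟨hx1, hx2⟩
    by_contra hxΩ
    have hxf : x ∈ frontier Ω := by
      rw [hΩo.frontier_eq]; exact ⟨hx1, hxΩ⟩
    have h0 : infDist x (frontier Ω) = 0 := infDist_zero_of_mem hxf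
    have hx2' : δ' ≤ infDist x (frontier Ω) := hx2
    rw [h0] at hx2'
    exact absurd hx2' (not_le.2 hδ'0)
  have hzK : z ∈ K := ⟨subset_closure hz, show δ' ≤ _ from min_le_right _ _⟩
  obtain ⟨x0, hx0K, hx0min⟩ := hKcpt.exists_isMinOn ⟨z, hzK⟩ (hvcont.mono hKΩ)
  have hx0Ω : x0 ∈ Ω := hKΩ hx0K
  have hglobal : ∀ x ∈ Ω, v x0 ≤ v x := by
    intro x hx
    rcases le_or_gt δ' (infDist x (frontier Ω)) with h1 | h1
    · exact hx0min ⟨subset_closure hx, h1⟩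
    · have hux : Real.exp (v z + A * R ^ 2) ≤ u x :=
        hδ x hx (lt_of_lt_of_le h1 (min_le_left _ _))
      have h2 : v z + A * R ^ 2 ≤ Real.log (1 + u x) := by
        rw [← Real.log_exp (v z + A * R ^ 2)]
        apply Real.log_le_log (Real.exp_pos _)
        linarith
      have h3 : A * ‖x‖ ^ 2 ≤ A * R ^ 2 := by
        apply mul_le_mul_of_nonneg_left _ hApos.le
        have := hR x hx
        nlinarith [norm_nonneg x]
      have : v z ≤ v x := by
        have hx' : v x = Real.log (1 + u x) - A * ‖x‖ ^ 2 := rfl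
        rw [hx']
        linarith
      exact (hx0min hzK).trans this
  have hlocmin : IsLocalMin v x0 := by
    filter_upwards [hΩo.eventually_mem hx0Ω] with x hx using hglobal x hx
  -- per-direction second derivative bound
  set m0 : ℝ := u x0 with hm0
  have hm0pos : 0 < m0 := hupos x0 hx0Ω
  have hdir : ∀ i : Fin N,
      2 * A * (1 + m0) ≤ fderiv ℝ (fderiv ℝ u) x0 (EuclideanSpace.single i (1:ℝ))
        (EuclideanSpace.single i (1:ℝ)) := by
    intro i
    set e : Euc N := EuclideanSpace.single i (1:ℝ) with he
    set D : ℝ := fderiv ℝ (fderiv ℝ u) x0 e e with hD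
    set J : Set ℝ := {t | x0 + t • e ∈ Ω} with hJ
    have hlinec : Continuous (fun t : ℝ => x0 + t • e) :=
      continuous_const.add (continuous_id.smul continuous_const)
    have hJo : IsOpen J := hΩo.preimage hlinec
    have h0J : (0:ℝ) ∈ J := by show x0 + (0:ℝ) • e ∈ Ω; simpa using hx0Ω
    set b : ℝ := inner ℝ x0 e with hb
    set g : ℝ → ℝ := fun t => u (x0 + t • e) with hg
    set φ : ℝ → ℝ := fun t => fderiv ℝ u (x0 + t • e) e with hφ
    set P : ℝ → ℝ := fun t => Real.log (1 + g t) - A * (‖x0‖ ^ 2 + 2 * t * b + t ^ 2) with hP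
    have hnorm : ∀ t : ℝ, ‖x0 + t • e‖ ^ 2 = ‖x0‖ ^ 2 + 2 * t * b + t ^ 2 := by
      intro t
      rw [norm_add_sq_real, real_inner_smul_right, norm_smul]
      simp only [Real.norm_eq_abs, mul_pow, sq_abs]
      have he1 : ‖e‖ = 1 := by rw [he, EuclideanSpace.norm_single]; norm_num
      rw [he1]; ring
    have hPv : ∀ t : ℝ, P t = v (x0 + t • e) := by
      intro t
      have : v (x0 + t • e) = Real.log (1 + u (x0 + t • e)) - A * ‖x0 + t • e‖ ^ 2 := rfl
      rw [this, hnorm t]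
    have hg0 : g 0 = m0 := by simp [hg, hm0]
    have hPmin : IsLocalMin P 0 := by
      have hc : ContinuousAt (fun t : ℝ => x0 + t • e) 0 := hlinec.continuousAt
      have h1 : IsLocalMin (v ∘ fun t : ℝ => x0 + t • e) 0 := by
        refine IsLocalMin.comp_continuous ?_ hc
        simpa using hlocmin
      have : P = v ∘ fun t : ℝ => x0 + t • e := funext fun t => hPv t
      rw [this]; exact h1
    have hline : ContDiff ℝ 2 (fun t : ℝ => x0 + t • e) :=
      contDiff_const.add (contDiff_id.smul contDiff_const)
    have hgC : ContDiffOn ℝ 2 g J := hu.comp hline.contDiffOn (fun t ht => ht)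
    have h1g : ∀ t ∈ J, (0:ℝ) < 1 + g t := by
      intro t ht
      have := hupos _ ht
      simp only [hg]; linarith
    have hPC : ContDiffOn ℝ 2 P J := by
      apply ContDiffOn.sub
      · exact (contDiffOn_const.add hgC).log (fun t ht => (h1g t ht).ne')
      · exact (ContDiff.contDiffOn (by fun_prop))
    have htest : 0 ≤ deriv (deriv P) 0 := secondDeriv_test hJo h0J hPC hPmin
    -- first derivative of P
    have hder1 : ∀ t ∈ J, HasDerivAt P (φ t / (1 + g t) - A * (2 * b + 2 * t)) t := by
      intro t ht
      have hgd : HasDerivAt (fun s : ℝ => 1 + g s) (φ t) t :=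
        (lineDeriv1 hΩo hu e ht).const_add 1
      have hlog : HasDerivAt (fun s : ℝ => Real.log (1 + g s)) (φ t / (1 + g t)) t :=
        hgd.log (h1g t ht).ne'
      have hpoly : HasDerivAt (fun s : ℝ => A * (‖x0‖ ^ 2 + 2 * s * b + s ^ 2))
          (A * (2 * b + 2 * t)) t := by
        have ha : HasDerivAt (fun s : ℝ => 2 * s * b) (2 * b) t := by
          simpa using ((hasDerivAt_id t).const_mul 2).mul_const b
        have hb2 : HasDerivAt (fun s : ℝ => s ^ 2) (2 * t) t := by
          simpa using hasDerivAt_pow 2 t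
        exact ((ha.const_add (‖x0‖ ^ 2)).add hb2).const_mul A
      exact hlog.sub hpoly
    have heq2 : deriv P =ᶠ[𝓝 0] fun t => φ t / (1 + g t) - A * (2 * b + 2 * t) := by
      filter_upwards [hJo.eventually_mem h0J] with t ht using (hder1 t ht).deriv
    -- second derivative of P at 0
    have hφd : HasDerivAt φ D 0 := lineDeriv2 hΩo hu hx0Ω e
    have hgd0 : HasDerivAt (fun s : ℝ => 1 + g s) (φ 0) 0 :=
      (lineDeriv1 hΩo hu e h0J).const_add 1
    have hne : (1 + g 0) ≠ 0 := (h1g 0 h0J).ne'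
    have hdiv : HasDerivAt (fun t => φ t / (1 + g t))
        ((D * (1 + g 0) - φ 0 * φ 0) / (1 + g 0) ^ 2) 0 := hφd.div hgd0 hne
    have hpoly0 : HasDerivAt (fun t : ℝ => A * (2 * b + 2 * t)) (A * 2) 0 := by
      have : HasDerivAt (fun t : ℝ => 2 * b + 2 * t) 2 0 := by
        simpa using ((hasDerivAt_id (0:ℝ)).const_mul 2).const_add (2 * b)
      simpa using this.const_mul A
    have hQD : HasDerivAt (fun t => φ t / (1 + g t) - A * (2 * b + 2 * t))
        ((D * (1 + g 0) - φ 0 * φ 0) / (1 + g 0) ^ 2 - A * 2) 0 := hdiv.sub hpoly0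
    have hd2 : deriv (deriv P) 0 = (D * (1 + m0) - φ 0 * φ 0) / (1 + m0) ^ 2 - A * 2 := by
      rw [heq2.deriv_eq, hQD.deriv, hg0]
    rw [hd2] at htest
    have h1m : (0:ℝ) < 1 + m0 := by linarith
    have h4 : A * 2 ≤ (D * (1 + m0) - φ 0 * φ 0) / (1 + m0) ^ 2 := by linarith
    have h5 : A * 2 * (1 + m0) ^ 2 ≤ D * (1 + m0) - φ 0 * φ 0 :=
      (le_div_iff₀ (by positivity : (0:ℝ) < (1 + m0) ^ 2)).1 h4
    have h6 : 2 * A * (1 + m0) * (1 + m0) = A * 2 * (1 + m0) ^ 2 := by ring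
    have h7 : 2 * A * (1 + m0) * (1 + m0) ≤ D * (1 + m0) := by
      have := mul_self_nonneg (φ 0)
      linarith
    exact le_of_mul_le_mul_right h7 h1m
  -- sum over directions
  have hlap : lap u x0 = ∑ i : Fin N, fderiv ℝ (fderiv ℝ u) x0
      (EuclideanSpace.single i (1:ℝ)) (EuclideanSpace.single i (1:ℝ)) := by
    unfold lap
    refine Finset.sum_congr rfl fun i _ => ?_
    rw [iteratedFDeriv_two_apply]
    simp
  have hsum : (N : ℝ) * (2 * A * (1 + m0)) ≤ lap u x0 := by
    rw [hlap]
    calc (N : ℝ) * (2 * A * (1 + m0))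
        = ∑ _i : Fin N, 2 * A * (1 + m0) := by
          rw [Finset.sum_const, Finset.card_univ, Fintype.card_fin]
          simp [nsmul_eq_mul]
      _ ≤ _ := Finset.sum_le_sum fun i _ => hdir i
  have hlaple : lap u x0 ≤ c * (1 + m0) := by
    have := hpde x0 hx0Ω
    have hk := hkey x0 hx0Ω
    have hg : 0 ≤ ‖gradient u x0‖ := norm_nonneg _
    linarith
  have : (N:ℝ) * (2 * A * (1 + m0)) ≤ c * (1 + m0) := le_trans hsum hlaple
  nlinarith

end
end

section
/- Let f ∈ C¹[0,∞) satisfy (A₁): f ≥ 0 and f(u)/u is increasing on (0,∞); and (A₂): ∫₁^∞ [F(t)]^{-1/2} dt < ∞, where F(t) = ∫₀^t f(s) ds. Then lim_{u → ∞} f(u)/u = +∞ and lim_{u → ∞} f'(u) = +∞. -/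
open Set Filter MeasureTheory Topology

theorem stmt7 (f : ℝ → ℝ)
    (hf : ContDiffOn ℝ 1 f (Ici 0))
    (hfnn : ∀ s ∈ Ici (0 : ℝ), 0 ≤ f s)
    (hA1 : StrictMonoOn (fun u => f u / u) (Ioi 0))
    (hA2 : IntegrableOn (fun t => (∫ s in (0:ℝ)..t, f s) ^ (-(1:ℝ)/2)) (Ioi 1)) :
    Tendsto (fun u => f u / u) atTop atTop ∧ Tendsto (deriv f) atTop atTop := by
  have hfc : ContinuousOn f (Ici 0) := hf.continuousOn
  have hint : ∀ a b : ℝ, 0 ≤ a → IntervalIntegrable f volume a b ∨ b < a := by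
    intro a b ha
    rcases le_or_gt a b with hab | hab
    · exact Or.inl ((hfc.mono (fun x hx => le_trans ha (by
        rcases hx with ⟨h1, h2⟩; simpa [inf_eq_left.mpr hab] using h1))).intervalIntegrable)
    · exact Or.inr hab
  -- integrability of f on [a,b] for 0 ≤ a ≤ b
  have hii : ∀ a b : ℝ, 0 ≤ a → a ≤ b → IntervalIntegrable f volume a b := by
    intro a b ha hab
    apply ContinuousOn.intervalIntegrable
    apply hfc.mono
    rw [uIcc_of_le hab]
    exact fun x hx => le_trans ha hx.1
  -- key claim: the quotient is unbounded
  have key : ∀ M : ℝ, ∃ u, 0 < u ∧ M ≤ f u / u := by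
    intro M
    by_contra h
    push_neg at h
    set C : ℝ := max M 1 with hC
    have hC0 : (0:ℝ) < C := lt_of_lt_of_le one_pos (le_max_right _ _)
    have hfu : ∀ u, 0 ≤ u → f u ≤ C * u := by
      intro u hu
      rcases eq_or_lt_of_le hu with rfl | hu'
      · -- f 0 = 0
        have h1 : Tendsto f (𝓝[>] (0:ℝ)) (𝓝 (f 0)) :=
          ((hfc 0 (mem_Ici.mpr le_rfl)).mono Ioi_subset_Ici_self).tendsto
        have h2 : ∀ᶠ u in 𝓝[>] (0:ℝ), f u ≤ C * u := by
          filter_upwards [self_mem_nhdsWithin] with u hu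
          have h3 : f u / u < M := h u hu
          have h3' : f u / u ≤ C := le_trans h3.le (le_max_left _ _)
          calc f u = (f u / u) * u := (div_mul_cancel₀ (f u) (ne_of_gt (mem_Ioi.mp hu))).symm
          _ ≤ C * u := mul_le_mul_of_nonneg_right h3' (le_of_lt hu)
        have h4 : Tendsto (fun u : ℝ => C * u) (𝓝[>] (0:ℝ)) (𝓝 (C * 0)) :=
          ((continuous_const.mul continuous_id).tendsto 0).mono_left nhdsWithin_le_nhds
        have h5 : f 0 ≤ C * 0 := le_of_tendsto_of_tendsto h1 h4 h2
        exact h5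
      · have h3 : f u / u < M := h u hu'
        have : f u / u ≤ C := le_trans h3.le (le_max_left _ _)
        calc f u = (f u / u) * u := (div_mul_cancel₀ (f u) (ne_of_gt hu')).symm
        _ ≤ C * u := mul_le_mul_of_nonneg_right this hu
    -- F 1 > 0
    have hZ : Set.Subsingleton {u : ℝ | 0 < u ∧ f u = 0} := by
      intro a ha b hb
      have : (fun u => f u / u) a = (fun u => f u / u) b := by
        simp [ha.2, hb.2]
      exact hA1.injOn ha.1 hb.1 this
    have hZnull : volume {u : ℝ | 0 < u ∧ f u = 0} = 0 :=
      Set.Subsingleton.measure_zero hZ _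
    have hF1 : 0 < ∫ s in (0:ℝ)..1, f s := by
      rw [intervalIntegral.integral_pos_iff_support_of_nonneg_ae']
      · refine ⟨one_pos, ?_⟩
        have hsub : Ioc (0:ℝ) 1 \ {u : ℝ | 0 < u ∧ f u = 0} ⊆ Function.support f ∩ Ioc 0 1 := by
          intro x hx
          refine ⟨fun hfx => hx.2 ⟨hx.1.1, hfx⟩, hx.1⟩
        have hone : volume (Ioc (0:ℝ) 1 \ {u : ℝ | 0 < u ∧ f u = 0}) = 1 := by
          rw [measure_diff_null hZnull]
          simp
        refine lt_of_lt_of_le ?_ (measure_mono hsub)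
        rw [hone]
        norm_num
      · rw [uIoc_of_le (zero_le_one)]
        filter_upwards [ae_restrict_mem measurableSet_Ioc] with x hx
        exact hfnn x (le_of_lt hx.1)
      · exact hii 0 1 le_rfl zero_le_one
    -- F monotone-ish : for t ≥ 1, F t ≥ F 1, F t ≤ C t^2
    have hFge : ∀ t : ℝ, 1 ≤ t → (∫ s in (0:ℝ)..1, f s) ≤ ∫ s in (0:ℝ)..t, f s := by
      intro t ht
      have h1 := hii 0 1 le_rfl zero_le_one
      have h2 := hii 1 t zero_le_one ht
      rw [← intervalIntegral.integral_add_adjacent_intervals h1 h2]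
      have : 0 ≤ ∫ s in (1:ℝ)..t, f s :=
        intervalIntegral.integral_nonneg ht (fun x hx => hfnn x (le_trans zero_le_one hx.1))
      linarith
    have hFle : ∀ t : ℝ, 1 ≤ t → (∫ s in (0:ℝ)..t, f s) ≤ C * t ^ 2 := by
      intro t ht
      have ht0 : (0:ℝ) ≤ t := le_trans zero_le_one ht
      have h1 : (∫ s in (0:ℝ)..t, f s) ≤ ∫ s in (0:ℝ)..t, C * s := by
        apply intervalIntegral.integral_mono_on ht0 (hii 0 t le_rfl ht0)
        · exact (continuous_const.mul continuous_id).intervalIntegrable 0 t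
        · intro x hx; exact hfu x hx.1
      have h2 : (∫ s in (0:ℝ)..t, C * s) = C * (t ^ 2 / 2) := by
        rw [intervalIntegral.integral_const_mul, integral_id]
        ring
      nlinarith [sq_nonneg t]
    -- deduce t⁻¹ integrable on Ioi 1, contradiction
    have hmaj : IntegrableOn (fun t : ℝ => t⁻¹) (Ioi (1:ℝ)) := by
      have hconst := hA2.const_mul (C ^ ((1:ℝ)/2))
      apply Integrable.mono hconst
      · exact (measurable_inv.aestronglyMeasurable)
      · rw [ae_restrict_iff' measurableSet_Ioi]
        filter_upwards with t ht
        have ht1 : (1:ℝ) < t := ht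
        have ht0 : (0:ℝ) < t := lt_trans one_pos ht1
        have hFpos : 0 < ∫ s in (0:ℝ)..t, f s := lt_of_lt_of_le hF1 (hFge t ht1.le)
        have hFle' := hFle t ht1.le
        have hCt : (0:ℝ) < C * t ^ 2 := by positivity
        have h5 : (C * t ^ 2) ^ (-(1:ℝ)/2) ≤ (∫ s in (0:ℝ)..t, f s) ^ (-(1:ℝ)/2) := by
          apply Real.rpow_le_rpow_of_nonpos hFpos hFle'
          norm_num
        have h6 : (C * t ^ 2) ^ (-(1:ℝ)/2) = C ^ (-(1:ℝ)/2) * t⁻¹ := by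
          rw [Real.mul_rpow hC0.le (by positivity)]
          congr 1
          rw [← Real.rpow_natCast t 2, ← Real.rpow_mul ht0.le]
          norm_num [Real.rpow_neg_one]
        have h7 : t⁻¹ ≤ C ^ ((1:ℝ)/2) * (∫ s in (0:ℝ)..t, f s) ^ (-(1:ℝ)/2) := by
          have h8 : C ^ ((1:ℝ)/2) * (C * t ^ 2) ^ (-(1:ℝ)/2) = t⁻¹ := by
            rw [h6, ← mul_assoc, ← Real.rpow_add hC0]
            norm_num
          calc t⁻¹ = C ^ ((1:ℝ)/2) * (C * t ^ 2) ^ (-(1:ℝ)/2) := h8.symm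
          _ ≤ C ^ ((1:ℝ)/2) * (∫ s in (0:ℝ)..t, f s) ^ (-(1:ℝ)/2) := by
              apply mul_le_mul_of_nonneg_left h5 (Real.rpow_nonneg hC0.le _)
        rw [Real.norm_eq_abs, Real.norm_eq_abs, abs_of_nonneg (by positivity),
          abs_of_nonneg (by positivity)]
        exact h7
    have : IntegrableOn (fun t : ℝ => t ^ (-1 : ℝ)) (Ioi (1:ℝ)) := by
      apply hmaj.congr_fun _ measurableSet_Ioi
      intro x hx
      exact (Real.rpow_neg_one x).symm
    rw [integrableOn_Ioi_rpow_iff one_pos] at this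
    linarith
  -- first conclusion
  have hg : Tendsto (fun u => f u / u) atTop atTop := by
    rw [tendsto_atTop]
    intro b
    obtain ⟨u, hu, hub⟩ := key b
    filter_upwards [eventually_ge_atTop u] with v hv
    rcases eq_or_lt_of_le hv with rfl | h
    · exact hub
    · exact hub.trans (hA1 hu (lt_trans hu h) h).le
  refine ⟨hg, ?_⟩
  -- derivative bound
  have hd : ∀ u : ℝ, 0 < u → f u / u ≤ deriv f u := by
    intro u hu
    have hdiff : HasDerivAt f (deriv f u) u := by
      have : ContDiffAt ℝ 1 f u := hf.contDiffAt (Ici_mem_nhds hu)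
      exact (this.differentiableAt one_ne_zero).hasDerivAt
    have hslope : Tendsto (slope f u) (𝓝[>] u) (𝓝 (deriv f u)) :=
      (hasDerivAt_iff_tendsto_slope.mp hdiff).mono_left
        (nhdsWithin_mono _ (fun x hx => ne_of_gt hx))
    refine ge_of_tendsto hslope ?_
    filter_upwards [self_mem_nhdsWithin] with v hv
    have hv' : u < v := hv
    have hmono : f u / u ≤ f v / v := (hA1 hu (lt_trans hu hv') hv').le
    have h1 : f u * v ≤ f v * u := by
      rw [div_le_div_iff₀ hu (lt_trans hu hv')] at hmono
      linarith
    rw [slope_def_field, div_le_div_iff₀ hu (by linarith : (0:ℝ) < v - u)]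
    nlinarith
  apply tendsto_atTop_mono' atTop _ hg
  filter_upwards [eventually_gt_atTop 0] with u hu
  exact hd u hu
end

section
/- Let f : (0,∞) → (0,∞) satisfy (A₃): there exist ζ > 0 and t₀ ≥ 1 such that f(ξt) ≤ ξ^{1+ζ} f(t) for all ξ ∈ (0,1) and all t ≥ t₀/ξ. Assume that for every ξ > 0 the limit A(ξ) := lim_{u → ∞} f(ξu)/(ξ f(u)) exists, is a positive real number, and that ξ ↦ A(ξ) is continuous on (0,∞). Then A : (0,∞) → (0,∞) is strictly increasing and bijective; in particular lim_{ξ → 0⁺} A(ξ) = 0. -/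
open Set Filter MeasureTheory Topology

theorem stmt10 (f : ℝ → ℝ) (hfpos : ∀ t > (0 : ℝ), 0 < f t)
    (ζ t₀ : ℝ) (hζ : 0 < ζ) (ht₀ : 1 ≤ t₀)
    -- (A₃): f(ξt) ≤ ξ^{1+ζ} f(t) for all ξ ∈ (0,1) and t ≥ t₀/ξ
    (hA3 : ∀ ξ ∈ Ioo (0 : ℝ) 1, ∀ t ≥ t₀ / ξ, f (ξ * t) ≤ ξ ^ (1 + ζ) * f t)
    (A : ℝ → ℝ)
    -- (A₄): A(ξ) = lim_{u → ∞} f(ξu)/(ξ f(u)) exists, is positive, and is continuous in ξ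
    (hA : ∀ ξ > (0 : ℝ), Tendsto (fun u => f (ξ * u) / (ξ * f u)) atTop (𝓝 (A ξ)))
    (hApos : ∀ ξ > (0 : ℝ), 0 < A ξ)
    (hAcont : ContinuousOn A (Ioi 0)) :
    StrictMonoOn A (Ioi 0) ∧ BijOn A (Ioi 0) (Ioi 0) ∧
      Tendsto A (𝓝[>] 0) (𝓝 0) := by
  -- A 1 = 1
  have hA1 : A 1 = 1 := by
    have h := hA 1 one_pos
    have h2 : Tendsto (fun u : ℝ => f (1 * u) / (1 * f u)) atTop (𝓝 1) := by
      apply Tendsto.congr' _ tendsto_const_nhds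
      filter_upwards [eventually_ge_atTop (1 : ℝ)] with u hu
      have hfu : 0 < f u := hfpos u (by linarith)
      rw [one_mul, one_mul, div_self hfu.ne']
    exact tendsto_nhds_unique h h2
  -- multiplicativity
  have hmul : ∀ x > (0 : ℝ), ∀ y > (0 : ℝ), A (x * y) = A x * A y := by
    intro x hx y hy
    have hy' : Tendsto (fun u : ℝ => y * u) atTop atTop :=
      Tendsto.const_mul_atTop hy tendsto_id
    have h1 : Tendsto (fun u => f (x * (y * u)) / (x * f (y * u))) atTop (𝓝 (A x)) :=
      (hA x hx).comp hy'
    have h2 := h1.mul (hA y hy)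
    refine tendsto_nhds_unique (hA _ (mul_pos hx hy)) (h2.congr' ?_)
    filter_upwards [eventually_ge_atTop (1 : ℝ)] with u hu
    have hfu : 0 < f u := hfpos u (by linarith)
    have hfyu : 0 < f (y * u) := hfpos _ (by positivity)
    rw [← mul_assoc]
    field_simp
  -- A ξ ≤ ξ ^ ζ for ξ ∈ (0,1)
  have hbound : ∀ ξ ∈ Ioo (0 : ℝ) 1, A ξ ≤ ξ ^ ζ := by
    intro ξ hξ
    refine le_of_tendsto (hA ξ hξ.1) ?_
    filter_upwards [eventually_ge_atTop (max (t₀ / ξ) 1)] with t ht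
    have ht1 : (1 : ℝ) ≤ t := le_trans (le_max_right _ _) ht
    have hft : 0 < f t := hfpos t (by linarith)
    have h3 := hA3 ξ hξ t (le_trans (le_max_left _ _) ht)
    rw [div_le_iff₀ (mul_pos hξ.1 hft)]
    calc f (ξ * t) ≤ ξ ^ (1 + ζ) * f t := h3
      _ = ξ ^ ζ * (ξ * f t) := by
          rw [Real.rpow_add hξ.1, Real.rpow_one]; ring
  have hlt1 : ∀ ξ ∈ Ioo (0 : ℝ) 1, A ξ < 1 := by
    intro ξ hξ
    exact lt_of_le_of_lt (hbound ξ hξ) (Real.rpow_lt_one hξ.1.le hξ.2 hζ)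
  -- strict monotonicity
  have hmono : StrictMonoOn A (Ioi 0) := by
    intro x hx y hy hxy
    simp only [mem_Ioi] at hx hy
    have hxy' : x / y ∈ Ioo (0 : ℝ) 1 :=
      ⟨div_pos hx hy, (div_lt_one hy).2 hxy⟩
    have : A x = A y * A (x / y) := by
      rw [← hmul y hy (x / y) hxy'.1, mul_div_cancel₀ _ hy.ne']
    rw [this]
    calc A y * A (x / y) < A y * 1 :=
          mul_lt_mul_of_pos_left (hlt1 _ hxy') (hApos y hy)
      _ = A y := mul_one _
  -- A 2 > 1
  have hinv : ∀ x > (0 : ℝ), A x⁻¹ = (A x)⁻¹ := by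
    intro x hx
    have h := hmul x hx x⁻¹ (inv_pos.2 hx)
    rw [mul_inv_cancel₀ hx.ne', hA1] at h
    exact eq_inv_of_mul_eq_one_right h.symm
  have hA2 : 1 < A 2 := by
    have h2 : A (2⁻¹ : ℝ) < 1 := hlt1 _ (by norm_num)
    rw [hinv 2 (by norm_num)] at h2
    have := hApos 2 (by norm_num)
    rw [inv_lt_one_iff₀] at h2
    rcases h2 with h | h
    · linarith
    · exact h
  -- powers
  have hpow : ∀ x > (0 : ℝ), ∀ n : ℕ, A (x ^ n) = A x ^ n := by
    intro x hx n
    induction n with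
    | zero => simpa using hA1
    | succ n ih =>
        rw [pow_succ, pow_succ, hmul _ (by positivity) _ hx, ih]
  -- surjectivity
  have hsurj : SurjOn A (Ioi 0) (Ioi 0) := by
    intro y hy
    simp only [mem_Ioi] at hy
    obtain ⟨n, hn⟩ := pow_unbounded_of_one_lt (max y y⁻¹) hA2
    have hny : y < A 2 ^ n := lt_of_le_of_lt (le_max_left _ _) hn
    have hny' : y⁻¹ < A 2 ^ n := lt_of_le_of_lt (le_max_right _ _) hn
    have hlow : A ((2 : ℝ)⁻¹ ^ n) < y := by
      rw [hpow _ (by norm_num), hinv 2 (by norm_num), inv_pow]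
      have hpos : (0 : ℝ) < A 2 ^ n := pow_pos (by linarith) n
      rw [inv_lt_comm₀ hpos hy]
      exact hny'
    have hhigh : y < A ((2 : ℝ) ^ n) := by rw [hpow _ (by norm_num)]; exact hny
    have hab : ((2 : ℝ)⁻¹) ^ n ≤ 2 ^ n := by
      apply pow_le_pow_left₀ (by norm_num) (by norm_num)
    have hsub : Icc ((2 : ℝ)⁻¹ ^ n) (2 ^ n) ⊆ Ioi 0 := by
      intro z hz
      exact lt_of_lt_of_le (by positivity) hz.1
    have := intermediate_value_Icc hab (hAcont.mono hsub)
    have hymem : y ∈ Icc (A ((2:ℝ)⁻¹ ^ n)) (A ((2:ℝ) ^ n)) := ⟨hlow.le, hhigh.le⟩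
    obtain ⟨x, hxmem, hxy⟩ := this hymem
    exact ⟨x, hsub hxmem, hxy⟩
  refine ⟨hmono, ⟨fun x hx => hApos x hx, hmono.injOn, hsurj⟩, ?_⟩
  -- limit at 0⁺
  have hub : Tendsto (fun ξ : ℝ => ξ ^ ζ) (𝓝[>] 0) (𝓝 0) := by
    have hc : ContinuousAt (fun ξ : ℝ => ξ ^ ζ) 0 :=
      Real.continuousAt_rpow_const 0 ζ (Or.inr hζ.le)
    have h2 : Tendsto (fun ξ : ℝ => ξ ^ ζ) (𝓝[>] 0) (𝓝 ((0:ℝ) ^ ζ)) :=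
      hc.tendsto.mono_left nhdsWithin_le_nhds
    rwa [Real.zero_rpow hζ.ne'] at h2
  refine tendsto_of_tendsto_of_tendsto_of_le_of_le' tendsto_const_nhds hub ?_ ?_
  · filter_upwards [self_mem_nhdsWithin] with ξ hξ
    exact (hApos ξ hξ).le
  · have hmem : Ioo (0 : ℝ) 1 ∈ 𝓝[>] (0 : ℝ) :=
      Ioo_mem_nhdsGT_of_mem (by norm_num : (0:ℝ) ∈ Ico (0:ℝ) 1)
    filter_upwards [hmem] with ξ hξ
    exact hbound ξ hξ
end

section
/- Let N ≥ 3 and let p : [0,∞) → [0,∞) be continuous. Define A(r) = ∫₀^r t^{1-N} ( ∫₀^t s^{N-1} p(s) ds ) dt for r > 0. Then for every r > 0, ( [1 − (1/2)^{N-2}] / (N−2) ) ∫₀^{r/2} t p(t) dt ≤ A(r) ≤ (1/(N−2)) ∫₀^r t p(t) dt. Consequently, ∫₀^∞ t p(t) dt = +∞ if and only if lim_{r → ∞} A(r) = +∞. -/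
open Set Filter MeasureTheory Topology

noncomputable section

/-- `A(r) = ∫₀ʳ t^{1-N} (∫₀ᵗ s^{N-1} p(s) ds) dt`. -/
noncomputable def Afun (N : ℕ) (p : ℝ → ℝ) (r : ℝ) : ℝ :=
  ∫ t in Ioc (0:ℝ) r, t ^ (1 - (N : ℝ)) * ∫ s in Ioc (0:ℝ) t, s ^ ((N : ℝ) - 1) * p s

namespace St11

variable {N : ℕ} {p : ℝ → ℝ}

def F (N : ℕ) (p : ℝ → ℝ) (t : ℝ) : ℝ := ∫ s in (0:ℝ)..t, s ^ ((N : ℝ) - 1) * p s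
def G (p : ℝ → ℝ) (t : ℝ) : ℝ := ∫ s in (0:ℝ)..t, s * p s
def A (N : ℕ) (p : ℝ → ℝ) (r : ℝ) : ℝ := ∫ t in (0:ℝ)..r, t ^ (1 - (N : ℝ)) * F N p t

lemma hn1 (hN : 3 ≤ N) : (1:ℝ) ≤ (N : ℝ) - 2 := by
  have : (3:ℝ) ≤ (N:ℝ) := by exact_mod_cast hN
  linarith

lemma contInner (hN : 3 ≤ N) (hpc : ContinuousOn p (Ici 0)) :
    ContinuousOn (fun s => s ^ ((N : ℝ) - 1) * p s) (Ici 0) := by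
  have h1 : (0:ℝ) ≤ (N:ℝ) - 1 := by have := hn1 hN; linarith
  exact (Real.continuous_rpow_const h1).continuousOn.mul hpc

lemma contLin (hpc : ContinuousOn p (Ici 0)) :
    ContinuousOn (fun s => s * p s) (Ici 0) := continuous_id.continuousOn.mul hpc

lemma uIcc_sub {a b : ℝ} (ha : 0 ≤ a) (hb : 0 ≤ b) : uIcc a b ⊆ Ici 0 := by
  intro x hx
  rcases Set.mem_uIcc.mp hx with ⟨h1, _⟩ | ⟨h1, _⟩ <;> simp only [mem_Ici] <;> linarith

lemma intInner (hN : 3 ≤ N) (hpc : ContinuousOn p (Ici 0)) {a b : ℝ} (ha : 0 ≤ a) (hb : 0 ≤ b) :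
    IntervalIntegrable (fun s => s ^ ((N : ℝ) - 1) * p s) volume a b :=
  ((contInner hN hpc).mono (uIcc_sub ha hb)).intervalIntegrable

lemma intLin (hpc : ContinuousOn p (Ici 0)) {a b : ℝ} (ha : 0 ≤ a) (hb : 0 ≤ b) :
    IntervalIntegrable (fun s => s * p s) volume a b :=
  ((contLin hpc).mono (uIcc_sub ha hb)).intervalIntegrable

lemma F_nonneg (hp0 : ∀ t ∈ Ici (0:ℝ), 0 ≤ p t) {t : ℝ} (ht : 0 ≤ t) : 0 ≤ F N p t :=
  intervalIntegral.integral_nonneg ht fun s hs =>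
    mul_nonneg (Real.rpow_nonneg hs.1 _) (hp0 s hs.1)

lemma G_nonneg (hp0 : ∀ t ∈ Ici (0:ℝ), 0 ≤ p t) {t : ℝ} (ht : 0 ≤ t) : 0 ≤ G p t :=
  intervalIntegral.integral_nonneg ht fun s hs => mul_nonneg hs.1 (hp0 s hs.1)

lemma G_add (hpc : ContinuousOn p (Ici 0)) {a b : ℝ} (ha : 0 ≤ a) (hab : a ≤ b) :
    G p b = G p a + ∫ s in a..b, s * p s :=
  (intervalIntegral.integral_add_adjacent_intervals (intLin hpc le_rfl ha) (intLin hpc ha (ha.trans hab))).symm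

lemma G_mono (hpc : ContinuousOn p (Ici 0)) (hp0 : ∀ t ∈ Ici (0:ℝ), 0 ≤ p t)
    {a b : ℝ} (ha : 0 ≤ a) (hab : a ≤ b) : G p a ≤ G p b := by
  rw [G_add hpc ha hab]
  have : 0 ≤ ∫ s in a..b, s * p s :=
    intervalIntegral.integral_nonneg hab fun s hs =>
      mul_nonneg (ha.trans hs.1) (hp0 s (ha.trans hs.1))
  linarith

lemma seg_bound (hN : 3 ≤ N) (hpc : ContinuousOn p (Ici 0)) (hp0 : ∀ t ∈ Ici (0:ℝ), 0 ≤ p t)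
    {a b : ℝ} (ha : 0 ≤ a) (hab : a ≤ b) :
    (∫ s in a..b, s ^ ((N : ℝ) - 1) * p s) ≤ b ^ ((N : ℝ) - 2) * ∫ s in a..b, s * p s := by
  rw [← intervalIntegral.integral_const_mul]
  apply intervalIntegral.integral_mono_on hab (intInner hN hpc ha (ha.trans hab))
    ((intLin hpc ha (ha.trans hab)).const_mul _)
  intro s hs
  have hs0 : 0 ≤ s := ha.trans hs.1
  rcases eq_or_lt_of_le hs0 with h | h
  · have hne : ((N:ℝ) - 1) ≠ 0 := by have := hn1 hN; intro hc; linarith [sub_eq_zero.mp hc]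
    rw [← h, Real.zero_rpow hne]
    simp
  · have e1 : s ^ ((N:ℝ) - 1) = s ^ ((N:ℝ) - 2) * s := by
      rw [show ((N:ℝ) - 1) = ((N:ℝ) - 2) + 1 by ring, Real.rpow_add h, Real.rpow_one]
    rw [e1, mul_assoc]
    exact mul_le_mul_of_nonneg_right
      (Real.rpow_le_rpow hs0 hs.2 (by have := hn1 hN; linarith))
      (mul_nonneg hs0 (hp0 s hs0))

lemma F_le (hN : 3 ≤ N) (hpc : ContinuousOn p (Ici 0)) (hp0 : ∀ t ∈ Ici (0:ℝ), 0 ≤ p t)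
    {t : ℝ} (ht : 0 ≤ t) : F N p t ≤ t ^ ((N : ℝ) - 2) * G p t :=
  seg_bound hN hpc hp0 le_rfl ht


lemma bound_lin (hpc : ContinuousOn p (Ici 0)) {x : ℝ} (hx : 0 ≤ x) :
    ∃ C : ℝ, 0 ≤ C ∧ ∀ t ∈ Icc (0:ℝ) x, t * p t ≤ C := by
  obtain ⟨z, _, hz⟩ := isCompact_Icc.exists_isMaxOn (nonempty_Icc.mpr hx)
    ((contLin hpc).mono (Icc_subset_Ici_self))
  exact ⟨max (z * p z) 0, le_max_right _ _, fun t ht => (hz ht).trans (le_max_left _ _)⟩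

lemma G_le (hpc : ContinuousOn p (Ici 0)) {x C : ℝ} (hx : 0 ≤ x)
    (hC : ∀ t ∈ Icc (0:ℝ) x, t * p t ≤ C) {t : ℝ} (ht : t ∈ Icc (0:ℝ) x) :
    G p t ≤ C * t := by
  have h := intervalIntegral.integral_mono_on (μ := volume) ht.1 (intLin hpc le_rfl ht.1)
    intervalIntegrable_const (g := fun _ => C)
    (fun s hs => hC s ⟨hs.1, hs.2.trans ht.2⟩)
  simpa [G, mul_comm] using h

lemma outer_bound (hN : 3 ≤ N) (hpc : ContinuousOn p (Ici 0)) (hp0 : ∀ t ∈ Ici (0:ℝ), 0 ≤ p t)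
    {x C : ℝ} (hx : 0 ≤ x) (hC : ∀ t ∈ Icc (0:ℝ) x, t * p t ≤ C) {t : ℝ}
    (ht : t ∈ Ioc (0:ℝ) x) : t ^ (1 - (N : ℝ)) * F N p t ≤ C := by
  have ht0 : 0 < t := ht.1
  have h1 : t ^ (1 - (N : ℝ)) * F N p t ≤ t ^ (1 - (N : ℝ)) * (t ^ ((N:ℝ) - 2) * G p t) :=
    mul_le_mul_of_nonneg_left (F_le hN hpc hp0 ht0.le) (Real.rpow_nonneg ht0.le _)
  have e1 : t ^ (1 - (N : ℝ)) * (t ^ ((N:ℝ) - 2) * G p t) = t⁻¹ * G p t := by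
    rw [← mul_assoc, ← Real.rpow_add ht0, show (1 - (N:ℝ) + ((N:ℝ) - 2)) = (-1 : ℝ) by ring,
      Real.rpow_neg_one]
  have h2 : t⁻¹ * G p t ≤ t⁻¹ * (C * t) :=
    mul_le_mul_of_nonneg_left (G_le hpc hx hC ⟨ht0.le, ht.2⟩) (by positivity)
  have e2 : t⁻¹ * (C * t) = C := by field_simp
  linarith [h1, e1 ▸ h1, h2]

lemma outer_integrableOn (hN : 3 ≤ N) (hpc : ContinuousOn p (Ici 0))
    (hp0 : ∀ t ∈ Ici (0:ℝ), 0 ≤ p t) {x : ℝ} (hx : 0 ≤ x) :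
    IntegrableOn (fun t => t ^ (1 - (N : ℝ)) * F N p t) (Ioc 0 x) volume := by
  obtain ⟨C, hC0, hC⟩ := bound_lin hpc hx
  have hFc : ContinuousOn (F N p) (Icc 0 x) := by
    have hint : IntegrableOn (fun s => s ^ ((N : ℝ) - 1) * p s) (uIcc 0 x) volume := by
      rw [uIcc_of_le hx]
      exact ((contInner hN hpc).mono Icc_subset_Ici_self).integrableOn_Icc
    have := intervalIntegral.continuousOn_primitive_interval
      (f := fun s => s ^ ((N : ℝ) - 1) * p s) (a := (0:ℝ)) (b := x) (μ := volume) hint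
    rwa [uIcc_of_le hx] at this
  have hmeas : AEStronglyMeasurable (fun t => t ^ (1 - (N : ℝ)) * F N p t)
      (volume.restrict (Ioc 0 x)) := by
    have h1 : ContinuousOn (fun t : ℝ => t ^ (1 - (N : ℝ))) (Ioc 0 x) := fun t ht =>
      (Real.continuousAt_rpow_const t _ (Or.inl ht.1.ne')).continuousWithinAt
    exact (h1.aestronglyMeasurable measurableSet_Ioc).mul
      ((hFc.mono Ioc_subset_Icc_self).aestronglyMeasurable measurableSet_Ioc)
  refine Integrable.mono' (g := fun _ => C)
    (integrableOn_const measure_Ioc_lt_top.ne) hmeas ?_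
  rw [ae_restrict_iff' measurableSet_Ioc]
  refine ae_of_all _ fun t ht => ?_
  rw [Real.norm_eq_abs, abs_of_nonneg (mul_nonneg (Real.rpow_nonneg ht.1.le _)
    (F_nonneg hp0 ht.1.le))]
  exact outer_bound hN hpc hp0 hx hC ht

lemma outer_intervalIntegrable (hN : 3 ≤ N) (hpc : ContinuousOn p (Ici 0))
    (hp0 : ∀ t ∈ Ici (0:ℝ), 0 ≤ p t) {x : ℝ} (hx : 0 ≤ x) :
    IntervalIntegrable (fun t => t ^ (1 - (N : ℝ)) * F N p t) volume 0 x :=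
  (intervalIntegrable_iff_integrableOn_Ioc_of_le hx).mpr (outer_integrableOn hN hpc hp0 hx)

lemma hF_deriv (hN : 3 ≤ N) (hpc : ContinuousOn p (Ici 0)) {x : ℝ} (hx : 0 < x) :
    HasDerivAt (F N p) (x ^ ((N : ℝ) - 1) * p x) x :=
  intervalIntegral.integral_hasDerivAt_right (intInner hN hpc le_rfl hx.le)
    ⟨Ici 0, Ici_mem_nhds hx, (contInner hN hpc).aestronglyMeasurable measurableSet_Ici⟩
    ((contInner hN hpc).continuousAt (Ici_mem_nhds hx))

lemma hG_deriv (hpc : ContinuousOn p (Ici 0)) {x : ℝ} (hx : 0 < x) :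
    HasDerivAt (G p) (x * p x) x :=
  intervalIntegral.integral_hasDerivAt_right (intLin hpc le_rfl hx.le)
    ⟨Ici 0, Ici_mem_nhds hx, (contLin hpc).aestronglyMeasurable measurableSet_Ici⟩
    ((contLin hpc).continuousAt (Ici_mem_nhds hx))

lemma hF_contOn (hN : 3 ≤ N) (hpc : ContinuousOn p (Ici 0)) :
    ContinuousOn (F N p) (Ioi 0) := fun y hy =>
  ((hF_deriv hN hpc hy).differentiableAt.continuousAt).continuousWithinAt

lemma hA_deriv (hN : 3 ≤ N) (hpc : ContinuousOn p (Ici 0)) (hp0 : ∀ t ∈ Ici (0:ℝ), 0 ≤ p t)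
    {x : ℝ} (hx : 0 < x) :
    HasDerivAt (A N p) (x ^ (1 - (N : ℝ)) * F N p x) x := by
  refine intervalIntegral.integral_hasDerivAt_right (outer_intervalIntegrable hN hpc hp0 hx.le)
    ⟨Ioi 0, Ioi_mem_nhds hx, ?_⟩ ?_
  · have h1 : ContinuousOn (fun t : ℝ => t ^ (1 - (N : ℝ))) (Ioi 0) := fun t ht =>
      (Real.continuousAt_rpow_const t _ (Or.inl (ne_of_gt ht))).continuousWithinAt
    exact (h1.aestronglyMeasurable measurableSet_Ioi).mul
      ((hF_contOn hN hpc).aestronglyMeasurable measurableSet_Ioi)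
  · exact (Real.continuousAt_rpow_const x _ (Or.inl hx.ne')).mul
      (hF_deriv hN hpc hx).differentiableAt.continuousAt

lemma hB_deriv (hN : 3 ≤ N) (hpc : ContinuousOn p (Ici 0)) {x : ℝ} (hx : 0 < x) :
    HasDerivAt (fun r => (1 / ((N:ℝ) - 2)) * (G p r - r ^ (2 - (N : ℝ)) * F N p r))
      (x ^ (1 - (N : ℝ)) * F N p x) x := by
  have h1 : HasDerivAt (fun r : ℝ => r ^ (2 - (N : ℝ)))
      ((2 - (N:ℝ)) * x ^ (2 - (N:ℝ) - 1)) x := Real.hasDerivAt_rpow_const (Or.inl hx.ne')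
  have h2 := h1.mul (hF_deriv hN hpc hx)
  have h3 := ((hG_deriv hpc hx).sub h2).const_mul (1 / ((N:ℝ) - 2))
  refine HasDerivAt.congr_deriv h3 ?_
  have hne : ((N:ℝ) - 2) ≠ 0 := by have := hn1 hN; linarith
  have e0 : (2 - (N:ℝ) - 1) = 1 - (N:ℝ) := by ring
  have e1 : x ^ ((2:ℝ) - (N:ℝ)) * (x ^ ((N:ℝ) - 1) * p x) = x * p x := by
    rw [← mul_assoc, ← Real.rpow_add hx, show (2 - (N:ℝ) + ((N:ℝ) - 1)) = (1:ℝ) by ring,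
      Real.rpow_one]
  rw [e0, e1]
  field_simp
  ring

lemma key (hN : 3 ≤ N) (hpc : ContinuousOn p (Ici 0)) (hp0 : ∀ t ∈ Ici (0:ℝ), 0 ≤ p t)
    {r : ℝ} (hr : 0 < r) :
    A N p r = (1 / ((N:ℝ) - 2)) * (G p r - r ^ (2 - (N : ℝ)) * F N p r) := by
  set B : ℝ → ℝ := fun t => (1 / ((N:ℝ) - 2)) * (G p t - t ^ (2 - (N : ℝ)) * F N p t) with hB
  set H : ℝ → ℝ := fun t => A N p t - B t with hH
  -- H is constant on (0, r]
  have hconst : ∀ a ∈ Ioc (0:ℝ) r, H r = H a := by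
    intro a ha
    have hcont : ContinuousOn H (Icc a r) := by
      intro y hy
      have hy0 : 0 < y := lt_of_lt_of_le ha.1 hy.1
      exact (((hA_deriv hN hpc hp0 hy0).sub (hB_deriv hN hpc hy0)).differentiableAt.continuousAt
        ).continuousWithinAt
    have hderiv : ∀ y ∈ Ico a r, HasDerivWithinAt H 0 (Ici y) y := by
      intro y hy
      have hy0 : 0 < y := lt_of_lt_of_le ha.1 hy.1
      have := (hA_deriv hN hpc hp0 hy0).sub (hB_deriv hN hpc hy0)
      rw [sub_self] at this
      exact this.hasDerivWithinAt
    exact constant_of_has_deriv_right_zero hcont hderiv r ⟨ha.2, le_rfl⟩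
  -- H tends to 0 at 0+
  obtain ⟨C, hC0, hC⟩ := bound_lin hpc hr.le
  have hmem : Ioc (0:ℝ) r ∈ 𝓝[>] (0:ℝ) := Ioc_mem_nhdsGT hr
  have hCt : Tendsto (fun a : ℝ => C * a) (𝓝[>] 0) (𝓝 0) := by
    have h : Tendsto (fun a : ℝ => C * a) (𝓝 0) (𝓝 (C * 0)) :=
      (continuous_const.mul continuous_id).tendsto (0:ℝ)
    rw [mul_zero] at h
    exact h.mono_left nhdsWithin_le_nhds
  have tA : Tendsto (A N p) (𝓝[>] 0) (𝓝 0) := by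
    refine squeeze_zero' ?_ ?_ hCt
    · filter_upwards [hmem] with a ha
      exact intervalIntegral.integral_nonneg ha.1.le fun t ht =>
        mul_nonneg (Real.rpow_nonneg ht.1 _) (F_nonneg hp0 ht.1)
    · filter_upwards [hmem] with a ha
      have h := intervalIntegral.integral_mono_on (μ := volume) ha.1.le
        (outer_intervalIntegrable hN hpc hp0 ha.1.le) intervalIntegrable_const
        (g := fun _ => C) ?_
      · simpa [A, mul_comm] using h
      · intro t ht
        rcases eq_or_lt_of_le ht.1 with h0 | h0
        · rw [← h0, Real.zero_rpow (by have := hn1 hN; intro hc; linarith [sub_eq_zero.mp hc] :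
            (1 - (N:ℝ)) ≠ 0), zero_mul]
          exact hC0
        · exact outer_bound hN hpc hp0 hr.le hC ⟨h0, ht.2.trans ha.2⟩
  have tG : Tendsto (G p) (𝓝[>] 0) (𝓝 0) := by
    refine squeeze_zero' ?_ ?_ hCt
    · filter_upwards [hmem] with a ha
      exact G_nonneg hp0 ha.1.le
    · filter_upwards [hmem] with a ha
      exact G_le hpc hr.le hC ⟨ha.1.le, ha.2⟩
  have tRF : Tendsto (fun a : ℝ => a ^ (2 - (N : ℝ)) * F N p a) (𝓝[>] 0) (𝓝 0) := by
    refine squeeze_zero' ?_ ?_ hCt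
    · filter_upwards [hmem] with a ha
      exact mul_nonneg (Real.rpow_nonneg ha.1.le _) (F_nonneg hp0 ha.1.le)
    · filter_upwards [hmem] with a ha
      have h1 : a ^ (2 - (N : ℝ)) * F N p a ≤ a ^ (2 - (N : ℝ)) * (a ^ ((N:ℝ) - 2) * G p a) :=
        mul_le_mul_of_nonneg_left (F_le hN hpc hp0 ha.1.le) (Real.rpow_nonneg ha.1.le _)
      have e1 : a ^ (2 - (N : ℝ)) * (a ^ ((N:ℝ) - 2) * G p a) = G p a := by
        rw [← mul_assoc, ← Real.rpow_add ha.1, show (2 - (N:ℝ) + ((N:ℝ) - 2)) = (0:ℝ) by ring,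
          Real.rpow_zero, one_mul]
      rw [e1] at h1
      exact h1.trans (G_le hpc hr.le hC ⟨ha.1.le, ha.2⟩)
  have tH : Tendsto H (𝓝[>] 0) (𝓝 0) := by
    have h := tA.sub ((tG.sub tRF).const_mul (1 / ((N:ℝ) - 2)))
    rw [sub_zero, mul_zero, sub_zero] at h
    exact h
  have tH' : Tendsto H (𝓝[>] 0) (𝓝 (H r)) := by
    refine tendsto_const_nhds.congr' ?_
    filter_upwards [hmem] with a ha
    exact hconst a ha
  have : H r = 0 := tendsto_nhds_unique tH' tH
  have := sub_eq_zero.mp this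
  simpa [hH, hB] using this

lemma upper (hN : 3 ≤ N) (hpc : ContinuousOn p (Ici 0)) (hp0 : ∀ t ∈ Ici (0:ℝ), 0 ≤ p t)
    {r : ℝ} (hr : 0 < r) : A N p r ≤ (1 / ((N:ℝ) - 2)) * G p r := by
  rw [key hN hpc hp0 hr]
  have h1 : (0:ℝ) ≤ 1 / ((N:ℝ) - 2) := by have := hn1 hN; positivity
  exact mul_le_mul_of_nonneg_left
    (sub_le_self _ (mul_nonneg (Real.rpow_nonneg hr.le _) (F_nonneg hp0 hr.le))) h1

lemma half_pow_eq (hN : 3 ≤ N) : ((1:ℝ)/2) ^ (((N:ℝ)) - 2) = ((1:ℝ)/2) ^ (N - 2) := by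
  have h2 : ((N:ℝ) - 2) = ((N - 2 : ℕ) : ℝ) := by
    have : (2:ℕ) ≤ N := by omega
    push_cast [Nat.cast_sub this]
    ring
  rw [h2, Real.rpow_natCast]

lemma lower (hN : 3 ≤ N) (hpc : ContinuousOn p (Ici 0)) (hp0 : ∀ t ∈ Ici (0:ℝ), 0 ≤ p t)
    {r : ℝ} (hr : 0 < r) :
    ((1 - (1 / 2 : ℝ) ^ (N - 2)) / ((N : ℝ) - 2)) * G p (r / 2) ≤ A N p r := by
  have hr2 : (0:ℝ) < r / 2 := by linarith
  have hhalf : r / 2 ≤ r := by linarith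
  have hsplit : F N p r = F N p (r/2) + ∫ s in (r/2)..r, s ^ ((N:ℝ) - 1) * p s :=
    (intervalIntegral.integral_add_adjacent_intervals (intInner hN hpc le_rfl hr2.le)
      (intInner hN hpc hr2.le hr.le)).symm
  have h1 : F N p (r/2) ≤ (r/2) ^ ((N:ℝ) - 2) * G p (r/2) := F_le hN hpc hp0 hr2.le
  have h2 : (∫ s in (r/2)..r, s ^ ((N:ℝ) - 1) * p s)
      ≤ r ^ ((N:ℝ) - 2) * ∫ s in (r/2)..r, s * p s := seg_bound hN hpc hp0 hr2.le hhalf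
  have h3 : (∫ s in (r/2)..r, s * p s) = G p r - G p (r/2) := by
    rw [G_add hpc hr2.le hhalf]; ring
  rw [h3] at h2
  have hrp : (0:ℝ) ≤ r ^ (2 - (N:ℝ)) := Real.rpow_nonneg hr.le _
  have e1 : r ^ (2 - (N:ℝ)) * r ^ ((N:ℝ) - 2) = 1 := by
    rw [← Real.rpow_add hr, show (2 - (N:ℝ) + ((N:ℝ) - 2)) = (0:ℝ) by ring, Real.rpow_zero]
  have e2 : r ^ (2 - (N:ℝ)) * (r/2) ^ ((N:ℝ) - 2) = (1/2 : ℝ) ^ (N - 2) := by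
    rw [Real.div_rpow hr.le (by norm_num : (0:ℝ) ≤ 2), ← half_pow_eq hN,
      Real.div_rpow (by norm_num : (0:ℝ) ≤ 1) (by norm_num : (0:ℝ) ≤ 2), Real.one_rpow]
    field_simp
    linear_combination e1
  have hb1 : r ^ (2 - (N:ℝ)) * F N p (r/2) ≤ (1/2 : ℝ) ^ (N - 2) * G p (r/2) := by
    calc r ^ (2 - (N:ℝ)) * F N p (r/2) ≤ r ^ (2 - (N:ℝ)) * ((r/2) ^ ((N:ℝ) - 2) * G p (r/2)) :=
          mul_le_mul_of_nonneg_left h1 hrp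
      _ = (r ^ (2 - (N:ℝ)) * (r/2) ^ ((N:ℝ) - 2)) * G p (r/2) := by ring
      _ = (1/2 : ℝ) ^ (N - 2) * G p (r/2) := by rw [e2]
  have hb2 : r ^ (2 - (N:ℝ)) * (∫ s in (r/2)..r, s ^ ((N:ℝ) - 1) * p s)
      ≤ G p r - G p (r/2) := by
    calc r ^ (2 - (N:ℝ)) * (∫ s in (r/2)..r, s ^ ((N:ℝ) - 1) * p s)
        ≤ r ^ (2 - (N:ℝ)) * (r ^ ((N:ℝ) - 2) * (G p r - G p (r/2))) :=
          mul_le_mul_of_nonneg_left h2 hrp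
      _ = (r ^ (2 - (N:ℝ)) * r ^ ((N:ℝ) - 2)) * (G p r - G p (r/2)) := by ring
      _ = G p r - G p (r/2) := by rw [e1, one_mul]
  have hbound : r ^ (2 - (N:ℝ)) * F N p r
      ≤ (1/2 : ℝ) ^ (N - 2) * G p (r/2) + (G p r - G p (r/2)) := by
    rw [hsplit, mul_add]
    exact add_le_add hb1 hb2
  rw [key hN hpc hp0 hr]
  have heq : ((1 - (1 / 2 : ℝ) ^ (N - 2)) / ((N : ℝ) - 2)) * G p (r / 2)
      = (1 / ((N:ℝ) - 2)) * ((1 - (1 / 2 : ℝ) ^ (N - 2)) * G p (r / 2)) := by ring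
  rw [heq]
  have h1n : (0:ℝ) ≤ 1 / ((N:ℝ) - 2) := by have := hn1 hN; positivity
  exact mul_le_mul_of_nonneg_left (by linarith) h1n

lemma Afun_eq {r : ℝ} (hr : 0 ≤ r) : Afun N p r = A N p r := by
  rw [Afun, A, intervalIntegral.integral_of_le hr]
  apply setIntegral_congr_fun measurableSet_Ioc
  intro t ht
  simp only [F]
  rw [intervalIntegral.integral_of_le ht.1.le]

lemma GtoTop (hpc : ContinuousOn p (Ici 0)) (hp0 : ∀ t ∈ Ici (0:ℝ), 0 ≤ p t)
    (hni : ¬ IntegrableOn (fun t => t * p t) (Ioi 0) volume) :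
    Tendsto (G p) atTop atTop := by
  have hub : ∀ M : ℝ, ∃ R, 0 ≤ R ∧ M ≤ G p R := by
    by_contra h
    push_neg at h
    obtain ⟨M, hM⟩ := h
    apply hni
    apply integrableOn_Ioi_of_intervalIntegral_norm_bounded M 0
      (fun n : ℕ => (intervalIntegrable_iff_integrableOn_Ioc_of_le (Nat.cast_nonneg n)).mp
        (intLin hpc le_rfl (Nat.cast_nonneg n)))
      tendsto_natCast_atTop_atTop
    refine Eventually.of_forall fun n => ?_
    have he : (∫ x in (0:ℝ)..(n:ℝ), ‖x * p x‖) = G p n := by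
      apply intervalIntegral.integral_congr
      intro x hx
      have hx0 : 0 ≤ x := uIcc_sub le_rfl (Nat.cast_nonneg n) hx
      show ‖x * p x‖ = x * p x
      rw [Real.norm_eq_abs, abs_of_nonneg (mul_nonneg hx0 (hp0 x hx0))]
    rw [he]
    exact (hM (n:ℝ) (Nat.cast_nonneg n)).le
  rw [tendsto_atTop]
  intro M
  obtain ⟨R, hR0, hMR⟩ := hub M
  filter_upwards [eventually_ge_atTop R] with r hr
  exact hMR.trans (G_mono hpc hp0 hR0 hr)

end St11

theorem stmt11 {N : ℕ} (hN : 3 ≤ N) (p : ℝ → ℝ)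
    (hpc : ContinuousOn p (Ici 0)) (hp0 : ∀ t ∈ Ici (0 : ℝ), 0 ≤ p t) :
    (∀ r > (0 : ℝ),
      ((1 - (1 / 2 : ℝ) ^ (N - 2)) / ((N : ℝ) - 2)) * (∫ t in Ioc (0:ℝ) (r / 2), t * p t)
          ≤ Afun N p r ∧
        Afun N p r ≤ (1 / ((N : ℝ) - 2)) * ∫ t in Ioc (0:ℝ) r, t * p t) ∧
    (¬ IntegrableOn (fun t => t * p t) (Ioi 0) ↔ Tendsto (Afun N p) atTop atTop) := by

  have hGioc : ∀ r : ℝ, 0 ≤ r → (∫ t in Ioc (0:ℝ) r, t * p t) = St11.G p r := fun r hr =>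
    (intervalIntegral.integral_of_le hr).symm
  have hpart1 : ∀ r > (0:ℝ),
      ((1 - (1 / 2 : ℝ) ^ (N - 2)) / ((N : ℝ) - 2)) * (∫ t in Ioc (0:ℝ) (r / 2), t * p t)
          ≤ Afun N p r ∧
        Afun N p r ≤ (1 / ((N : ℝ) - 2)) * ∫ t in Ioc (0:ℝ) r, t * p t := by
    intro r hr
    rw [hGioc (r/2) (by linarith), hGioc r hr.le, St11.Afun_eq hr.le]
    exact ⟨St11.lower hN hpc hp0 hr, St11.upper hN hpc hp0 hr⟩
  refine ⟨hpart1, ?_, ?_⟩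
  · intro hni
    have hGtop : Tendsto (St11.G p) atTop atTop := St11.GtoTop hpc hp0 hni
    have hc : (0:ℝ) < (1 - (1 / 2 : ℝ) ^ (N - 2)) / ((N : ℝ) - 2) := by
      have h1 : (1 / 2 : ℝ) ^ (N - 2) < 1 :=
        pow_lt_one₀ (by norm_num) (by norm_num) (by omega)
      have h2 := St11.hn1 hN
      have h3 : (0:ℝ) < (N:ℝ) - 2 := by linarith
      have h4 : (0:ℝ) < 1 - (1 / 2 : ℝ) ^ (N - 2) := by linarith
      positivity
    have ht2 : Tendsto (fun r : ℝ => St11.G p (r / 2)) atTop atTop :=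
      hGtop.comp (tendsto_id.atTop_div_const two_pos)
    refine tendsto_atTop_mono' atTop ?_ (ht2.const_mul_atTop hc)
    filter_upwards [eventually_gt_atTop 0] with r hr
    rw [St11.Afun_eq hr.le]
    exact St11.lower hN hpc hp0 hr
  · intro htop hint
    set K := ∫ t in Ioi (0:ℝ), t * p t with hK
    have hb : ∀ r > (0:ℝ), Afun N p r ≤ (1 / ((N:ℝ) - 2)) * K := by
      intro r hr
      rw [St11.Afun_eq hr.le]
      refine (St11.upper hN hpc hp0 hr).trans ?_
      have hGK : St11.G p r ≤ K := by
        rw [← hGioc r hr.le]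
        refine setIntegral_mono_set hint ?_ (HasSubset.Subset.eventuallyLE Ioc_subset_Ioi_self)
        rw [EventuallyLE, ae_restrict_iff' measurableSet_Ioi]
        exact ae_of_all _ fun t ht => mul_nonneg (le_of_lt ht) (hp0 t (mem_Ici.mpr (le_of_lt ht)))
      have h1 : (0:ℝ) ≤ 1 / ((N:ℝ) - 2) := by have := St11.hn1 hN; positivity
      exact mul_le_mul_of_nonneg_left hGK h1
    obtain ⟨r, h1, h2⟩ :=
      ((htop.eventually_ge_atTop ((1 / ((N:ℝ) - 2)) * K + 1)).and (eventually_gt_atTop 0)).exists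
    linarith [hb r h2]



end
end

section
/- Let N ≥ 3, and let p, q : [0,∞) → [0,∞) be continuous with ∫₀^∞ t p(t) dt < ∞ and ∫₀^∞ t q(t) dt < ∞. Let f, g : [0,∞) → [0,∞) be continuous, positive and nondecreasing on (0,∞), and locally Lipschitz continuous on (0,∞). Let (u,v) and (ũ,ṽ) be two bounded positive entire radial solutions of the system, i.e. continuous functions on [0,∞), bounded, positive, satisfying for all r ≥ 0 the integral equations u(r) = u(0) + ∫₀^r t^{1-N} ∫₀^t s^{N-1} p(s) g(v(s)) ds dt and v(r) = v(0) + ∫₀^r t^{1-N} ∫₀^t s^{N-1} q(s) f(u(s)) ds dt, and similarly for (ũ,ṽ). Then there exists a positive constant C such that for all r ∈ [0,∞): max( |u(r) − ũ(r)|, |v(r) − ṽ(r)| ) ≤ C · max( |u(0) − ũ(0)|, |v(0) − ṽ(0)| ). -/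
open Set Filter MeasureTheory Topology

noncomputable section

section AuxLemmas

lemma integrableOn_of_bdd {G : ℝ → ℝ} {s : Set ℝ} (hs : MeasurableSet s)
    (hμ : volume s < ⊤) (hm : AEStronglyMeasurable G (volume.restrict s))
    {C : ℝ} (hb : ∀ x ∈ s, |G x| ≤ C) : IntegrableOn G s := by
  refine Integrable.mono' (g := fun _ => C) (integrableOn_const hμ.ne) hm ?_
  filter_upwards [ae_restrict_mem hs] with x hx using hb x hx

lemma contOn_rpow {c : ℝ} (hc : 0 ≤ c) : ContinuousOn (fun s : ℝ => s ^ c) (Ici 0) :=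
  fun s _ => (Real.continuousAt_rpow_const s c (Or.inr hc)).continuousWithinAt

lemma integrableOn_Ioc_of_contOn {F : ℝ → ℝ} {t : ℝ} (h : ContinuousOn F (Icc 0 t)) :
    IntegrableOn F (Ioc 0 t) :=
  h.integrableOn_Icc.mono_set Ioc_subset_Icc_self

lemma inner_contOn {n : ℝ} (hn : 3 ≤ n) {w : ℝ → ℝ} (hw : ContinuousOn w (Ici 0)) {t : ℝ} :
    ContinuousOn (fun s : ℝ => s ^ (n - 1) * w s) (Icc 0 t) :=
  ((contOn_rpow (by linarith)).mono Icc_subset_Ici_self).mul (hw.mono Icc_subset_Ici_self)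

lemma G_integrableOn {n : ℝ} (hn : 3 ≤ n) {w : ℝ → ℝ} (hw : ContinuousOn w (Ici 0))
    {r : ℝ} (hr : 0 ≤ r) :
    IntegrableOn (fun t => t ^ (1 - n) * ∫ s in Ioc (0:ℝ) t, s ^ (n - 1) * w s) (Ioc 0 r) := by
  obtain ⟨C, hC⟩ := (isCompact_Icc (a := (0:ℝ)) (b := r)).exists_bound_of_continuousOn
    (hw.mono Icc_subset_Ici_self)
  have hC0 : 0 ≤ C := le_trans (norm_nonneg _) (hC 0 ⟨le_rfl, hr⟩)
  have hAcont : ContinuousOn (fun t => ∫ s in Ioc (0:ℝ) t, s ^ (n - 1) * w s) (Icc 0 r) :=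
    intervalIntegral.continuousOn_primitive ((inner_contOn hn hw).integrableOn_Icc)
  have hGcont : ContinuousOn (fun t => t ^ (1 - n) * ∫ s in Ioc (0:ℝ) t, s ^ (n - 1) * w s)
      (Ioc 0 r) := by
    refine ContinuousOn.mul (fun t ht => ?_) (hAcont.mono Ioc_subset_Icc_self)
    exact (Real.continuousAt_rpow_const t (1 - n) (Or.inl ht.1.ne')).continuousWithinAt
  refine integrableOn_of_bdd measurableSet_Ioc measure_Ioc_lt_top
    (hGcont.aestronglyMeasurable measurableSet_Ioc) (C := C * r) (fun t ht => ?_)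
  have ht0 : 0 < t := ht.1
  have hA : |∫ s in Ioc (0:ℝ) t, s ^ (n - 1) * w s| ≤ t ^ (n - 1) * C * t := by
    have := norm_setIntegral_le_of_norm_le_const (μ := volume) (s := Ioc (0:ℝ) t)
      (f := fun s => s ^ (n - 1) * w s) (C := t ^ (n - 1) * C)
      measure_Ioc_lt_top (fun s hs => ?_)
    · rw [Real.norm_eq_abs] at this
      calc |∫ s in Ioc (0:ℝ) t, s ^ (n - 1) * w s|
          ≤ t ^ (n - 1) * C * (volume (Ioc (0:ℝ) t)).toReal := this
        _ = t ^ (n - 1) * C * t := by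
            rw [Real.volume_Ioc]; rw [ENNReal.toReal_ofReal (by linarith)]; ring_nf
    · rw [Real.norm_eq_abs, abs_mul]
      have h1 : |s ^ (n - 1)| = s ^ (n - 1) := abs_of_nonneg (Real.rpow_nonneg hs.1.le _)
      rw [h1]
      have h2 : s ^ (n - 1) ≤ t ^ (n - 1) := Real.rpow_le_rpow hs.1.le hs.2 (by linarith)
      have h3 : |w s| ≤ C := by
        have := hC s ⟨hs.1.le, hs.2.trans ht.2⟩
        rwa [Real.norm_eq_abs] at this
      exact mul_le_mul h2 h3 (abs_nonneg _) (Real.rpow_nonneg ht0.le _)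
  rw [abs_mul, abs_of_nonneg (Real.rpow_nonneg ht0.le (1 - n))]
  calc t ^ (1 - n) * |∫ s in Ioc (0:ℝ) t, s ^ (n - 1) * w s|
      ≤ t ^ (1 - n) * (t ^ (n - 1) * C * t) :=
        mul_le_mul_of_nonneg_left hA (Real.rpow_nonneg ht0.le _)
    _ = (t ^ (1 - n) * t ^ (n - 1)) * (C * t) := by ring
    _ = C * t := by
        rw [← Real.rpow_add ht0]; norm_num
    _ ≤ C * r := mul_le_mul_of_nonneg_left ht.2 hC0


lemma swap_key {n : ℝ} (hn : 3 ≤ n) {h : ℝ → ℝ} (hc : Continuous h)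
    (h0 : ∀ s, 0 ≤ h s) {r : ℝ} (hr : 0 ≤ r) :
    ∫ t in Ioc (0:ℝ) r, t ^ (1 - n) * ∫ s in Ioc (0:ℝ) t, s ^ (n - 1) * h s
      ≤ ∫ s in Ioc (0:ℝ) r, s * h s := by
  set μ := volume.restrict (Ioc (0:ℝ) r) with hμdef
  haveI : IsFiniteMeasure μ := ⟨by
    rw [hμdef, Measure.restrict_apply_univ]; exact measure_Ioc_lt_top⟩
  set F : ℝ → ℝ → ℝ := fun t s => if s ≤ t then t ^ (1 - n) * (s ^ (n - 1) * h s) else 0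
    with hFdef
  obtain ⟨C, hC⟩ := (isCompact_Icc (a := (0:ℝ)) (b := r)).exists_bound_of_continuousOn
    hc.continuousOn
  have hC0 : 0 ≤ C := le_trans (norm_nonneg _) (hC 0 ⟨le_rfl, hr⟩)
  -- measurability
  have hFmeas : Measurable (Function.uncurry F) := by
    apply Measurable.ite (measurableSet_le measurable_snd measurable_fst)
    · have m1 : Measurable fun z : ℝ × ℝ => z.1 ^ (1 - n) := by fun_prop
      have m2 : Measurable fun z : ℝ × ℝ => z.2 ^ (n - 1) := by fun_prop
      exact m1.mul (m2.mul (hc.measurable.comp measurable_snd))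
    · exact measurable_const
  -- integrability on the product
  have hFint : Integrable (Function.uncurry F) (μ.prod μ) := by
    refine Integrable.mono' (g := fun _ => C) (integrable_const C)
      hFmeas.aestronglyMeasurable ?_
    have : (μ.prod μ) = (volume.prod volume).restrict (Ioc (0:ℝ) r ×ˢ Ioc (0:ℝ) r) := by
      rw [hμdef, Measure.prod_restrict]
    rw [this]
    filter_upwards [ae_restrict_mem (measurableSet_Ioc.prod measurableSet_Ioc)] with z hz
    obtain ⟨hzt, hzs⟩ := hz
    rw [Function.uncurry]
    by_cases hle : z.2 ≤ z.1
    · rw [hFdef]; simp only [hle, if_true]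
      have hb : z.1 ^ (1 - n) * (z.2 ^ (n - 1) * h z.2) ≤ h z.2 := by
        have e1 : z.1 ^ (1 - n) ≤ z.2 ^ (1 - n) :=
          Real.rpow_le_rpow_of_nonpos hzs.1 hle (by linarith)
        calc z.1 ^ (1 - n) * (z.2 ^ (n - 1) * h z.2)
            ≤ z.2 ^ (1 - n) * (z.2 ^ (n - 1) * h z.2) :=
              mul_le_mul_of_nonneg_right e1
                (mul_nonneg (Real.rpow_nonneg hzs.1.le _) (h0 _))
          _ = (z.2 ^ (1 - n) * z.2 ^ (n - 1)) * h z.2 := by ring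
          _ = h z.2 := by rw [← Real.rpow_add hzs.1]; norm_num
      have hnn : 0 ≤ z.1 ^ (1 - n) * (z.2 ^ (n - 1) * h z.2) :=
        mul_nonneg (Real.rpow_nonneg hzt.1.le _)
          (mul_nonneg (Real.rpow_nonneg hzs.1.le _) (h0 _))
      rw [Real.norm_eq_abs, abs_of_nonneg hnn]
      have hcz := hC z.2 ⟨hzs.1.le, hzs.2⟩
      rw [Real.norm_eq_abs, abs_of_nonneg (h0 z.2)] at hcz
      exact hb.trans hcz
    · rw [hFdef]; simp only [hle, if_false]; simpa using hC0
  -- LHS equals the iterated integral of F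
  have hLHS : (∫ t in Ioc (0:ℝ) r, t ^ (1 - n) * ∫ s in Ioc (0:ℝ) t, s ^ (n - 1) * h s)
      = ∫ t, (∫ s, F t s ∂μ) ∂μ := by
    rw [hμdef]
    refine setIntegral_congr_fun measurableSet_Ioc (fun t ht => ?_)
    have e1 : ∀ s : ℝ, F t s = (Iic t).indicator (fun s => t ^ (1 - n) * (s ^ (n - 1) * h s)) s := by
      intro s; rw [hFdef, Set.indicator_apply]; rfl
    simp only [e1]
    rw [setIntegral_indicator measurableSet_Iic, Ioc_inter_Iic, min_eq_right ht.2,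
      integral_const_mul]
  rw [hLHS, integral_integral_swap hFint]
  -- bound the inner integral after swap
  have hinner : ∀ s ∈ Ioc (0:ℝ) r, (∫ t, F t s ∂μ) ≤ s * h s := by
    intro s hs
    have e1 : ∀ t : ℝ, F t s = (Ici s).indicator (fun t => t ^ (1 - n) * (s ^ (n - 1) * h s)) t := by
      intro t; simp only [hFdef, Set.indicator_apply, Set.mem_Ici]
    rw [hμdef]
    simp only [e1]
    rw [setIntegral_indicator measurableSet_Ici]
    have e2 : Ioc (0:ℝ) r ∩ Ici s = Icc s r := by
      ext t; simp only [mem_inter_iff, mem_Ioc, mem_Ici, mem_Icc]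
      constructor
      · rintro ⟨⟨_, h2⟩, h3⟩; exact ⟨h3, h2⟩
      · rintro ⟨h1, h2⟩; exact ⟨⟨lt_of_lt_of_le hs.1 h1, h2⟩, h1⟩
    rw [e2, integral_mul_const]
    have e3 : (∫ t in Icc s r, t ^ (1 - n)) ≤ s ^ (2 - n) := by
      rw [integral_Icc_eq_integral_Ioc, ← intervalIntegral.integral_of_le hs.2]
      rw [integral_rpow (Or.inr ⟨by linarith, by
        rw [Set.uIcc_of_le hs.2]; rintro ⟨h1, _⟩; linarith [hs.1]⟩)]
      have hy : (0:ℝ) ≤ r ^ (1 - n + 1) := Real.rpow_nonneg hr _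
      have hx : r ^ (1 - n + 1) ≤ s ^ (1 - n + 1) :=
        Real.rpow_le_rpow_of_nonpos hs.1 hs.2 (by linarith)
      have h2n : (2:ℝ) - n = 1 - n + 1 := by ring
      rw [h2n]
      rw [div_le_iff_of_neg (by linarith)]
      nlinarith [Real.rpow_nonneg hs.1.le (1 - n + 1)]
    calc (∫ t in Icc s r, t ^ (1 - n)) * (s ^ (n - 1) * h s)
        ≤ s ^ (2 - n) * (s ^ (n - 1) * h s) := by
          refine mul_le_mul_of_nonneg_right e3
            (mul_nonneg (Real.rpow_nonneg hs.1.le _) (h0 _))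
      _ = (s ^ (2 - n) * s ^ (n - 1)) * h s := by ring
      _ = s * h s := by
          rw [← Real.rpow_add hs.1]; norm_num
  -- compare
  have hg : Integrable (fun s => s * h s) μ :=
    ((continuous_id.mul hc).continuousOn.integrableOn_Icc (a := (0:ℝ)) (b := r)).mono_set
      Ioc_subset_Icc_self
  refine integral_mono_of_nonneg (μ := μ) ?_ hg ?_
  · filter_upwards [ae_restrict_mem (μ := volume) (s := Ioc (0:ℝ) r) measurableSet_Ioc] with s hs
    rw [Pi.zero_apply]
    refine setIntegral_nonneg measurableSet_Ioc (fun t ht => ?_)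
    rw [hFdef]
    by_cases hst : s ≤ t
    · simp only [hst, if_true]
      exact mul_nonneg (Real.rpow_nonneg ht.1.le _)
        (mul_nonneg (Real.rpow_nonneg hs.1.le _) (h0 _))
    · simp [hst]
  · filter_upwards [ae_restrict_mem (μ := volume) (s := Ioc (0:ℝ) r) measurableSet_Ioc] with s hs
    exact hinner s hs

lemma gronwall_aux {E k : ℝ → ℝ} (hE : Continuous E) (hk : Continuous k)
    (hk0 : ∀ r, 0 ≤ k r) {a : ℝ}
    (hineq : ∀ r, 0 ≤ r → E r ≤ a + ∫ s in Ioc (0:ℝ) r, k s * E s) :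
    ∀ r, 0 ≤ r → E r ≤ a * Real.exp (∫ s in Ioc (0:ℝ) r, k s) := by
  set Φ : ℝ → ℝ := fun r => a + ∫ t in (0:ℝ)..r, k t * E t with hΦdef
  set K : ℝ → ℝ := fun r => ∫ t in (0:ℝ)..r, k t with hKdef
  set ψ : ℝ → ℝ := fun r => Φ r * Real.exp (-K r) with hψdef
  have hkE : Continuous fun t => k t * E t := hk.mul hE
  have hΦd : ∀ r : ℝ, HasDerivAt Φ (k r * E r) r := by
    intro r
    have := intervalIntegral.integral_hasDerivAt_right (f := fun t => k t * E t)
      (hkE.intervalIntegrable 0 r) (hkE.stronglyMeasurable.stronglyMeasurableAtFilter)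
      hkE.continuousAt
    exact (this.const_add a)
  have hKd : ∀ r : ℝ, HasDerivAt K (k r) r := by
    intro r
    exact intervalIntegral.integral_hasDerivAt_right
      (hk.intervalIntegrable 0 r) (hk.stronglyMeasurable.stronglyMeasurableAtFilter)
      hk.continuousAt
  have hψd : ∀ r : ℝ, HasDerivAt ψ
      (k r * E r * Real.exp (-K r) + Φ r * (Real.exp (-K r) * (-(k r)))) r := by
    intro r
    have h1 : HasDerivAt (fun x => Real.exp (-K x)) (Real.exp (-K r) * (-(k r))) r := by
      have := ((hKd r).neg).exp
      simpa [mul_comm] using this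
    exact (hΦd r).mul h1
  have hΦint : ∀ r, 0 ≤ r → ∫ s in Ioc (0:ℝ) r, k s * E s = ∫ t in (0:ℝ)..r, k t * E t := by
    intro r hr; rw [intervalIntegral.integral_of_le hr]
  have hEΦ : ∀ r, 0 ≤ r → E r ≤ Φ r := by
    intro r hr
    have h2 := hineq r hr
    simp only [hΦdef]
    rwa [← hΦint r hr]
  have hanti : AntitoneOn ψ (Ici 0) := by
    refine antitoneOn_of_deriv_nonpos (convex_Ici 0)
      (fun x _ => ((hψd x).continuousAt.continuousWithinAt)) ?_ ?_
    · intro x _; exact (hψd x).differentiableAt.differentiableWithinAt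
    · intro x hx
      rw [interior_Ici] at hx
      rw [(hψd x).deriv]
      have hEx := hEΦ x (le_of_lt hx)
      have h1 : k x * E x * Real.exp (-K x) + Φ x * (Real.exp (-K x) * (-(k x)))
          = Real.exp (-K x) * (k x * (E x - Φ x)) := by ring
      rw [h1]
      apply mul_nonpos_of_nonneg_of_nonpos (Real.exp_nonneg _)
      exact mul_nonpos_of_nonneg_of_nonpos (hk0 x) (by linarith)
  intro r hr
  have hψr : ψ r ≤ ψ 0 := hanti (self_mem_Ici) hr hr
  have hψ0 : ψ 0 = a := by
    simp [hψdef, hΦdef, hKdef]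
  have hKr : K r = ∫ s in Ioc (0:ℝ) r, k s := by
    simp only [hKdef]; rw [intervalIntegral.integral_of_le hr]
  calc E r ≤ Φ r := hEΦ r hr
    _ = ψ r * Real.exp (K r) := by
        rw [hψdef]
        rw [mul_assoc, ← Real.exp_add]
        simp
    _ ≤ a * Real.exp (K r) :=
        mul_le_mul_of_nonneg_right (by rw [← hψ0]; exact hψr) (Real.exp_nonneg _)
    _ = a * Real.exp (∫ s in Ioc (0:ℝ) r, k s) := by rw [hKr]


lemma term_nonneg {n : ℝ} {a : ℝ → ℝ} (ha : ∀ s, 0 < s → 0 ≤ a s) (r : ℝ) :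
    0 ≤ ∫ t in Ioc (0:ℝ) r, t ^ (1 - n) * ∫ s in Ioc (0:ℝ) t, a s :=
  setIntegral_nonneg measurableSet_Ioc fun t ht => mul_nonneg (Real.rpow_nonneg ht.1.le _)
    (setIntegral_nonneg measurableSet_Ioc fun s hs => ha s hs.1)

lemma step_est {n : ℝ} (hn : 3 ≤ n) {p g v v' U U' : ℝ → ℝ} {L m M α β : ℝ}
    (hpc : ContinuousOn p (Ici 0)) (hp0 : ∀ s ∈ Ici (0:ℝ), 0 ≤ p s)
    (hgc : ContinuousOn g (Ici 0))
    (hv : ContinuousOn v (Ici 0)) (hv' : ContinuousOn v' (Ici 0))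
    (hm : 0 < m)
    (hvr : ∀ s ∈ Ici (0:ℝ), v s ∈ Icc m M) (hvr' : ∀ s ∈ Ici (0:ℝ), v' s ∈ Icc m M)
    (hL0 : 0 ≤ L)
    (hgL : ∀ x ∈ Icc m M, ∀ y ∈ Icc m M, |g x - g y| ≤ L * |x - y|)
    (hUeq : ∀ r ∈ Ici (0:ℝ), U r = α + ∫ t in Ioc (0:ℝ) r, t ^ (1 - n) *
      ∫ s in Ioc (0:ℝ) t, s ^ (n - 1) * p s * g (v s))
    (hUeq' : ∀ r ∈ Ici (0:ℝ), U' r = β + ∫ t in Ioc (0:ℝ) r, t ^ (1 - n) *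
      ∫ s in Ioc (0:ℝ) t, s ^ (n - 1) * p s * g (v' s))
    {r : ℝ} (hr : 0 ≤ r) :
    |U r - U' r| ≤ |α - β| + ∫ s in Ioc (0:ℝ) r, s * (L * (p s * |v s - v' s|)) := by
  have hvm : ∀ s ∈ Ici (0:ℝ), v s ∈ Ici (0:ℝ) := fun s hs => le_trans hm.le (hvr s hs).1
  have hvm' : ∀ s ∈ Ici (0:ℝ), v' s ∈ Ici (0:ℝ) := fun s hs => le_trans hm.le (hvr' s hs).1
  have hw : ContinuousOn (fun s => p s * g (v s)) (Ici 0) := hpc.mul (hgc.comp hv hvm)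
  have hw' : ContinuousOn (fun s => p s * g (v' s)) (Ici 0) := hpc.mul (hgc.comp hv' hvm')
  set h₀ : ℝ → ℝ := fun s => L * (p (max s 0) * |v (max s 0) - v' (max s 0)|) with hh₀
  have hmax : ∀ x : ℝ, max x 0 ∈ Ici (0:ℝ) := fun x => mem_Ici.2 (le_max_right x 0)
  have hmaxc : Continuous fun x : ℝ => max x 0 := continuous_id.max continuous_const
  have hvext : Continuous fun s : ℝ => v (max s 0) := hv.comp_continuous hmaxc hmax
  have hvext' : Continuous fun s : ℝ => v' (max s 0) := hv'.comp_continuous hmaxc hmax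
  have hpext : Continuous fun s : ℝ => p (max s 0) := hpc.comp_continuous hmaxc hmax
  have hh₀c : Continuous h₀ := continuous_const.mul (hpext.mul (hvext.sub hvext').abs)
  have hh₀0 : ∀ s, 0 ≤ h₀ s := fun s =>
    mul_nonneg hL0 (mul_nonneg (hp0 _ (hmax s)) (abs_nonneg _))
  have hGint : IntegrableOn (fun t => t ^ (1 - n) *
      ∫ s in Ioc (0:ℝ) t, s ^ (n - 1) * p s * g (v s)) (Ioc 0 r) := by
    have := G_integrableOn hn hw hr
    simpa only [mul_assoc] using this
  have hGint' : IntegrableOn (fun t => t ^ (1 - n) *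
      ∫ s in Ioc (0:ℝ) t, s ^ (n - 1) * p s * g (v' s)) (Ioc 0 r) := by
    have := G_integrableOn hn hw' hr
    simpa only [mul_assoc] using this
  have hHint : IntegrableOn (fun t => t ^ (1 - n) *
      ∫ s in Ioc (0:ℝ) t, s ^ (n - 1) * h₀ s) (Ioc 0 r) :=
    G_integrableOn hn hh₀c.continuousOn hr
  have key_t : ∀ t ∈ Ioc (0:ℝ) r,
      |(t ^ (1 - n) * ∫ s in Ioc (0:ℝ) t, s ^ (n - 1) * p s * g (v s)) -
        (t ^ (1 - n) * ∫ s in Ioc (0:ℝ) t, s ^ (n - 1) * p s * g (v' s))|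
        ≤ t ^ (1 - n) * ∫ s in Ioc (0:ℝ) t, s ^ (n - 1) * h₀ s := by
    intro t ht
    have ht0 : (0:ℝ) ≤ t := ht.1.le
    have hint1 : IntegrableOn (fun s => s ^ (n - 1) * p s * g (v s)) (Ioc 0 t) := by
      refine integrableOn_Ioc_of_contOn ?_
      have := ((contOn_rpow (c := n - 1) (by linarith)).mul hw).mono
        (Icc_subset_Ici_self (a := t) (b := (0:ℝ)))
      simpa only [mul_assoc, Pi.mul_def] using this
    have hint1' : IntegrableOn (fun s => s ^ (n - 1) * p s * g (v' s)) (Ioc 0 t) := by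
      refine integrableOn_Ioc_of_contOn ?_
      have := ((contOn_rpow (c := n - 1) (by linarith)).mul hw').mono
        (Icc_subset_Ici_self (a := t) (b := (0:ℝ)))
      simpa only [mul_assoc, Pi.mul_def] using this
    have hint2 : IntegrableOn (fun s => s ^ (n - 1) * h₀ s) (Ioc 0 t) :=
      integrableOn_Ioc_of_contOn
        (((contOn_rpow (by linarith)).mono Icc_subset_Ici_self).mul hh₀c.continuousOn)
    have hAbound : |(∫ s in Ioc (0:ℝ) t, s ^ (n - 1) * p s * g (v s)) -
        ∫ s in Ioc (0:ℝ) t, s ^ (n - 1) * p s * g (v' s)|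
        ≤ ∫ s in Ioc (0:ℝ) t, s ^ (n - 1) * h₀ s := by
      rw [← integral_sub hint1 hint1']
      have habs := norm_integral_le_integral_norm (μ := volume.restrict (Ioc (0:ℝ) t))
        (f := fun s => s ^ (n - 1) * p s * g (v s) - s ^ (n - 1) * p s * g (v' s))
      simp only [Real.norm_eq_abs] at habs
      refine habs.trans (setIntegral_mono_on ((hint1.sub hint1').abs) hint2
        measurableSet_Ioc ?_)
      intro s hs
      have hs0 : (0:ℝ) ≤ s := hs.1.le
      have hpos : (0:ℝ) ≤ s ^ (n - 1) * p s :=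
        mul_nonneg (Real.rpow_nonneg hs0 _) (hp0 s (mem_Ici.2 hs0))
      have e : s ^ (n - 1) * p s * g (v s) - s ^ (n - 1) * p s * g (v' s)
          = (s ^ (n - 1) * p s) * (g (v s) - g (v' s)) := by ring
      rw [e, abs_mul, abs_of_nonneg hpos]
      have hg := hgL (v s) (hvr s (mem_Ici.2 hs0)) (v' s) (hvr' s (mem_Ici.2 hs0))
      calc (s ^ (n - 1) * p s) * |g (v s) - g (v' s)|
          ≤ (s ^ (n - 1) * p s) * (L * |v s - v' s|) :=
            mul_le_mul_of_nonneg_left hg hpos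
        _ = s ^ (n - 1) * h₀ s := by
            rw [hh₀]; simp only [max_eq_left hs0]; ring
    calc |(t ^ (1 - n) * ∫ s in Ioc (0:ℝ) t, s ^ (n - 1) * p s * g (v s)) -
        (t ^ (1 - n) * ∫ s in Ioc (0:ℝ) t, s ^ (n - 1) * p s * g (v' s))|
        = t ^ (1 - n) * |(∫ s in Ioc (0:ℝ) t, s ^ (n - 1) * p s * g (v s)) -
            ∫ s in Ioc (0:ℝ) t, s ^ (n - 1) * p s * g (v' s)| := by
          rw [← mul_sub, abs_mul, abs_of_nonneg (Real.rpow_nonneg ht0 _)]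
      _ ≤ t ^ (1 - n) * ∫ s in Ioc (0:ℝ) t, s ^ (n - 1) * h₀ s :=
          mul_le_mul_of_nonneg_left hAbound (Real.rpow_nonneg ht0 _)
  have e1 : U r - U' r = (α - β) +
      ((∫ t in Ioc (0:ℝ) r, t ^ (1 - n) * ∫ s in Ioc (0:ℝ) t, s ^ (n - 1) * p s * g (v s)) -
       ∫ t in Ioc (0:ℝ) r, t ^ (1 - n) * ∫ s in Ioc (0:ℝ) t, s ^ (n - 1) * p s * g (v' s)) := by
    rw [hUeq r (mem_Ici.2 hr), hUeq' r (mem_Ici.2 hr)]; ring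
  have e2 : |(∫ t in Ioc (0:ℝ) r, t ^ (1 - n) *
        ∫ s in Ioc (0:ℝ) t, s ^ (n - 1) * p s * g (v s)) -
      ∫ t in Ioc (0:ℝ) r, t ^ (1 - n) * ∫ s in Ioc (0:ℝ) t, s ^ (n - 1) * p s * g (v' s)|
      ≤ ∫ s in Ioc (0:ℝ) r, s * h₀ s := by
    rw [← integral_sub hGint hGint']
    have habs := norm_integral_le_integral_norm (μ := volume.restrict (Ioc (0:ℝ) r))
      (f := fun t => (t ^ (1 - n) * ∫ s in Ioc (0:ℝ) t, s ^ (n - 1) * p s * g (v s)) -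
        t ^ (1 - n) * ∫ s in Ioc (0:ℝ) t, s ^ (n - 1) * p s * g (v' s))
    simp only [Real.norm_eq_abs] at habs
    refine habs.trans ?_
    refine le_trans (setIntegral_mono_on ((hGint.sub hGint').abs) hHint
      measurableSet_Ioc key_t) ?_
    exact swap_key hn hh₀c hh₀0 hr
  have e3 : (∫ s in Ioc (0:ℝ) r, s * h₀ s)
      = ∫ s in Ioc (0:ℝ) r, s * (L * (p s * |v s - v' s|)) := by
    refine setIntegral_congr_fun measurableSet_Ioc (fun s hs => ?_)
    rw [hh₀]; simp only [max_eq_left hs.1.le]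
  calc |U r - U' r| ≤ |α - β| + |(∫ t in Ioc (0:ℝ) r, t ^ (1 - n) *
        ∫ s in Ioc (0:ℝ) t, s ^ (n - 1) * p s * g (v s)) -
      ∫ t in Ioc (0:ℝ) r, t ^ (1 - n) * ∫ s in Ioc (0:ℝ) t, s ^ (n - 1) * p s * g (v' s)| := by
        rw [e1]; exact abs_add_le _ _
    _ ≤ |α - β| + ∫ s in Ioc (0:ℝ) r, s * (L * (p s * |v s - v' s|)) := by
        rw [← e3]; exact add_le_add le_rfl e2

end AuxLemmas

/-- A positive entire radial solution of the system `Δu = p(|x|) g(v)`, `Δv = q(|x|) f(u)`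
in `ℝ^N`, written in the equivalent integral-equation form in the radial variable. -/
def RadSysSol (N : ℕ) (p q f g : ℝ → ℝ) (u v : ℝ → ℝ) : Prop :=
  ContinuousOn u (Ici 0) ∧ ContinuousOn v (Ici 0) ∧
  (∀ r ∈ Ici (0 : ℝ), 0 < u r) ∧ (∀ r ∈ Ici (0 : ℝ), 0 < v r) ∧
  (∀ r ∈ Ici (0 : ℝ),
    u r = u 0 + ∫ t in Ioc (0:ℝ) r, t ^ (1 - (N : ℝ)) *
      ∫ s in Ioc (0:ℝ) t, s ^ ((N : ℝ) - 1) * p s * g (v s)) ∧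
  (∀ r ∈ Ici (0 : ℝ),
    v r = v 0 + ∫ t in Ioc (0:ℝ) r, t ^ (1 - (N : ℝ)) *
      ∫ s in Ioc (0:ℝ) t, s ^ ((N : ℝ) - 1) * q s * f (u s))

theorem stmt12 {N : ℕ} (hN : 3 ≤ N) (p q f g : ℝ → ℝ)
    (hpc : ContinuousOn p (Ici 0)) (hqc : ContinuousOn q (Ici 0))
    (hp0 : ∀ t ∈ Ici (0 : ℝ), 0 ≤ p t) (hq0 : ∀ t ∈ Ici (0 : ℝ), 0 ≤ q t)
    (hpint : IntegrableOn (fun t => t * p t) (Ioi 0))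
    (hqint : IntegrableOn (fun t => t * q t) (Ioi 0))
    (hfc : ContinuousOn f (Ici 0)) (hgc : ContinuousOn g (Ici 0))
    (hf0 : ∀ t ∈ Ici (0 : ℝ), 0 ≤ f t) (hg0 : ∀ t ∈ Ici (0 : ℝ), 0 ≤ g t)
    (hfpos : ∀ t > (0 : ℝ), 0 < f t) (hgpos : ∀ t > (0 : ℝ), 0 < g t)
    (hfmono : MonotoneOn f (Ioi 0)) (hgmono : MonotoneOn g (Ioi 0))
    (hflip : ∀ K ⊆ Ioi (0 : ℝ), IsCompact K → ∃ L, LipschitzOnWith L f K)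
    (hglip : ∀ K ⊆ Ioi (0 : ℝ), IsCompact K → ∃ L, LipschitzOnWith L g K)
    (u v u' v' : ℝ → ℝ)
    (hsol : RadSysSol N p q f g u v) (hsol' : RadSysSol N p q f g u' v')
    (hbdd : ∃ B : ℝ, ∀ r ∈ Ici (0 : ℝ), u r ≤ B ∧ v r ≤ B)
    (hbdd' : ∃ B : ℝ, ∀ r ∈ Ici (0 : ℝ), u' r ≤ B ∧ v' r ≤ B) :
    ∃ C > (0 : ℝ), ∀ r ∈ Ici (0 : ℝ),
      max |u r - u' r| |v r - v' r| ≤ C * max |u 0 - u' 0| |v 0 - v' 0| := by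
  obtain ⟨huc, hvc, hup, hvp, hueq, hveq⟩ := hsol
  obtain ⟨huc', hvc', hup', hvp', hueq', hveq'⟩ := hsol'
  obtain ⟨B, hB⟩ := hbdd
  obtain ⟨B', hB'⟩ := hbdd'
  set n : ℝ := (N : ℝ) with hndef
  have hn : 3 ≤ n := by rw [hndef]; exact_mod_cast hN
  set M : ℝ := max B B' with hM
  set m : ℝ := min (min (u 0) (v 0)) (min (u' 0) (v' 0)) with hmdef
  have hm : 0 < m := lt_min (lt_min (hup 0 self_mem_Ici) (hvp 0 self_mem_Ici))
    (lt_min (hup' 0 self_mem_Ici) (hvp' 0 self_mem_Ici))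
  -- ranges
  have hterm : ∀ (c w : ℝ → ℝ), (∀ s ∈ Ici (0:ℝ), 0 ≤ c s) → (∀ s ∈ Ici (0:ℝ), 0 < w s) →
      ∀ r : ℝ, 0 ≤ ∫ t in Ioc (0:ℝ) r, t ^ (1 - n) *
        ∫ s in Ioc (0:ℝ) t, s ^ (n - 1) * c s * w s := by
    intro c w hc hw r
    refine term_nonneg (fun s hs => ?_) r
    exact mul_nonneg (mul_nonneg (Real.rpow_nonneg hs.le _) (hc s (mem_Ici.2 hs.le)))
      (hw s (mem_Ici.2 hs.le)).le
  have hgv : ∀ s ∈ Ici (0:ℝ), 0 < g (v s) := fun s hs => hgpos _ (hvp s hs)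
  have hgv' : ∀ s ∈ Ici (0:ℝ), 0 < g (v' s) := fun s hs => hgpos _ (hvp' s hs)
  have hfu : ∀ s ∈ Ici (0:ℝ), 0 < f (u s) := fun s hs => hfpos _ (hup s hs)
  have hfu' : ∀ s ∈ Ici (0:ℝ), 0 < f (u' s) := fun s hs => hfpos _ (hup' s hs)
  have hurange : ∀ s ∈ Ici (0:ℝ), u s ∈ Icc m M := by
    intro s hs
    constructor
    · have h1 : u 0 ≤ u s := by
        rw [hueq s hs]
        exact le_add_of_nonneg_right (hterm p (fun x => g (v x)) hp0 hgv s)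
      exact le_trans (le_trans (min_le_left _ _) (min_le_left _ _)) h1
    · exact le_trans (hB s hs).1 (le_max_left _ _)
  have hvrange : ∀ s ∈ Ici (0:ℝ), v s ∈ Icc m M := by
    intro s hs
    constructor
    · have h1 : v 0 ≤ v s := by
        rw [hveq s hs]
        exact le_add_of_nonneg_right (hterm q (fun x => f (u x)) hq0 hfu s)
      exact le_trans (le_trans (min_le_left _ _) (min_le_right _ _)) h1
    · exact le_trans (hB s hs).2 (le_max_left _ _)
  have hurange' : ∀ s ∈ Ici (0:ℝ), u' s ∈ Icc m M := by
    intro s hs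
    constructor
    · have h1 : u' 0 ≤ u' s := by
        rw [hueq' s hs]
        exact le_add_of_nonneg_right (hterm p (fun x => g (v' x)) hp0 hgv' s)
      exact le_trans (le_trans (min_le_right _ _) (min_le_left _ _)) h1
    · exact le_trans (hB' s hs).1 (le_max_right _ _)
  have hvrange' : ∀ s ∈ Ici (0:ℝ), v' s ∈ Icc m M := by
    intro s hs
    constructor
    · have h1 : v' 0 ≤ v' s := by
        rw [hveq' s hs]
        exact le_add_of_nonneg_right (hterm q (fun x => f (u' x)) hq0 hfu' s)
      exact le_trans (le_trans (min_le_right _ _) (min_le_right _ _)) h1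
    · exact le_trans (hB' s hs).2 (le_max_right _ _)
  -- Lipschitz constants
  have hKsub : Icc m M ⊆ Ioi (0:ℝ) := fun x hx => lt_of_lt_of_le hm hx.1
  obtain ⟨Lf, hLf⟩ := hflip (Icc m M) hKsub isCompact_Icc
  obtain ⟨Lg, hLg⟩ := hglip (Icc m M) hKsub isCompact_Icc
  set L : ℝ := max (Lf : ℝ) (Lg : ℝ) with hLdef
  have hL0 : 0 ≤ L := le_trans Lf.coe_nonneg (le_max_left _ _)
  have hgL : ∀ x ∈ Icc m M, ∀ y ∈ Icc m M, |g x - g y| ≤ L * |x - y| := by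
    intro x hx y hy
    have := hLg.dist_le_mul x hx y hy
    rw [Real.dist_eq, Real.dist_eq] at this
    exact this.trans (mul_le_mul_of_nonneg_right (le_max_right _ _) (abs_nonneg _))
  have hfL : ∀ x ∈ Icc m M, ∀ y ∈ Icc m M, |f x - f y| ≤ L * |x - y| := by
    intro x hx y hy
    have := hLf.dist_le_mul x hx y hy
    rw [Real.dist_eq, Real.dist_eq] at this
    exact this.trans (mul_le_mul_of_nonneg_right (le_max_left _ _) (abs_nonneg _))
  -- the two basic estimates
  have est_u : ∀ r : ℝ, 0 ≤ r → |u r - u' r| ≤ |u 0 - u' 0| +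
      ∫ s in Ioc (0:ℝ) r, s * (L * (p s * |v s - v' s|)) := fun r hr =>
    step_est hn hpc hp0 hgc hvc hvc' hm hvrange hvrange' hL0 hgL hueq hueq' hr
  have est_v : ∀ r : ℝ, 0 ≤ r → |v r - v' r| ≤ |v 0 - v' 0| +
      ∫ s in Ioc (0:ℝ) r, s * (L * (q s * |u s - u' s|)) := fun r hr =>
    step_est hn hqc hq0 hfc huc huc' hm hurange hurange' hL0 hfL hveq hveq' hr
  -- Gronwall setup
  set δ : ℝ := max |u 0 - u' 0| |v 0 - v' 0| with hδdef
  have hδ0 : 0 ≤ δ := le_trans (abs_nonneg _) (le_max_left _ _)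
  set k : ℝ → ℝ := fun s => L * (s * p s + s * q s) with hkdef
  have hki : IntegrableOn k (Ioi 0) := (hpint.add hqint).const_mul L
  have hk0 : ∀ s ∈ Ici (0:ℝ), 0 ≤ k s := fun s hs =>
    mul_nonneg hL0 (add_nonneg (mul_nonneg hs (hp0 s hs)) (mul_nonneg hs (hq0 s hs)))
  set E : ℝ → ℝ := fun s => |u s - u' s| + |v s - v' s| with hEdef
  have hDuC : ContinuousOn (fun s => |u s - u' s|) (Ici 0) := (huc.sub huc').abs
  have hDvC : ContinuousOn (fun s => |v s - v' s|) (Ici 0) := (hvc.sub hvc').abs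
  have hEc : ContinuousOn E (Ici 0) := hDuC.add hDvC
  have hEineq : ∀ r : ℝ, 0 ≤ r → E r ≤ 2 * δ + ∫ s in Ioc (0:ℝ) r, k s * E s := by
    intro r hr
    have h1 := est_u r hr
    have h2 := est_v r hr
    have hI1 : IntegrableOn (fun s => s * (L * (p s * |v s - v' s|))) (Ioc 0 r) := by
      refine (ContinuousOn.integrableOn_Icc ?_).mono_set Ioc_subset_Icc_self
      exact (continuous_id.continuousOn.mul (continuousOn_const.mul
        ((hpc.mono Icc_subset_Ici_self).mul (hDvC.mono Icc_subset_Ici_self))))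
    have hI2 : IntegrableOn (fun s => s * (L * (q s * |u s - u' s|))) (Ioc 0 r) := by
      refine (ContinuousOn.integrableOn_Icc ?_).mono_set Ioc_subset_Icc_self
      exact (continuous_id.continuousOn.mul (continuousOn_const.mul
        ((hqc.mono Icc_subset_Ici_self).mul (hDuC.mono Icc_subset_Ici_self))))
    have hkE : IntegrableOn (fun s => k s * E s) (Ioc 0 r) := by
      refine (ContinuousOn.integrableOn_Icc ?_).mono_set Ioc_subset_Icc_self
      refine ContinuousOn.mul ?_ (hEc.mono Icc_subset_Ici_self)
      exact continuousOn_const.mul ((continuous_id.continuousOn.mul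
        (hpc.mono Icc_subset_Ici_self)).add (continuous_id.continuousOn.mul
        (hqc.mono Icc_subset_Ici_self)))
    have hsum : (∫ s in Ioc (0:ℝ) r, s * (L * (p s * |v s - v' s|))) +
        ∫ s in Ioc (0:ℝ) r, s * (L * (q s * |u s - u' s|))
        ≤ ∫ s in Ioc (0:ℝ) r, k s * E s := by
      rw [← integral_add hI1 hI2]
      refine setIntegral_mono_on (hI1.add hI2) hkE measurableSet_Ioc (fun s hs => ?_)
      have hs0 : (0:ℝ) ≤ s := hs.1.le
      have hp' := hp0 s (mem_Ici.2 hs0)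
      have hq' := hq0 s (mem_Ici.2 hs0)
      have hDu := abs_nonneg (u s - u' s)
      have hDv := abs_nonneg (v s - v' s)
      have h3 : 0 ≤ L * (s * p s) * |u s - u' s| :=
        mul_nonneg (mul_nonneg hL0 (mul_nonneg hs0 hp')) hDu
      have h4 : 0 ≤ L * (s * q s) * |v s - v' s| :=
        mul_nonneg (mul_nonneg hL0 (mul_nonneg hs0 hq')) hDv
      show s * (L * (p s * |v s - v' s|)) + s * (L * (q s * |u s - u' s|)) ≤
        L * (s * p s + s * q s) * (|u s - u' s| + |v s - v' s|)
      nlinarith [h3, h4]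
    have hδu : |u 0 - u' 0| ≤ δ := le_max_left _ _
    have hδv : |v 0 - v' 0| ≤ δ := le_max_right _ _
    rw [hEdef]
    calc |u r - u' r| + |v r - v' r|
        ≤ (|u 0 - u' 0| + ∫ s in Ioc (0:ℝ) r, s * (L * (p s * |v s - v' s|)))
          + (|v 0 - v' 0| + ∫ s in Ioc (0:ℝ) r, s * (L * (q s * |u s - u' s|))) :=
          add_le_add h1 h2
      _ ≤ 2 * δ + ∫ s in Ioc (0:ℝ) r, k s * E s := by linarith [hsum]
  -- extend and apply Gronwall
  have hmax : ∀ x : ℝ, max x 0 ∈ Ici (0:ℝ) := fun x => mem_Ici.2 (le_max_right x 0)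
  have hmaxc : Continuous fun x : ℝ => max x 0 := continuous_id.max continuous_const
  set Ex : ℝ → ℝ := fun s => E (max s 0) with hExdef
  set kx : ℝ → ℝ := fun s => k (max s 0) with hkxdef
  have hExc : Continuous Ex := hEc.comp_continuous hmaxc hmax
  have hkxc : Continuous kx := by
    have : ContinuousOn k (Ici 0) := continuousOn_const.mul
      ((continuous_id.continuousOn.mul hpc).add (continuous_id.continuousOn.mul hqc))
    exact this.comp_continuous hmaxc hmax
  have hkx0 : ∀ s, 0 ≤ kx s := fun s => hk0 _ (hmax s)
  have hgron : ∀ r : ℝ, 0 ≤ r → Ex r ≤ (2 * δ) * Real.exp (∫ s in Ioc (0:ℝ) r, kx s) := by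
    refine gronwall_aux hExc hkxc hkx0 (fun r hr => ?_)
    have e1 : Ex r = E r := by rw [hExdef]; simp only [max_eq_left hr]
    have e2 : (∫ s in Ioc (0:ℝ) r, kx s * Ex s) = ∫ s in Ioc (0:ℝ) r, k s * E s := by
      refine setIntegral_congr_fun measurableSet_Ioc (fun s hs => ?_)
      rw [hkxdef, hExdef]; simp only [max_eq_left hs.1.le]
    rw [e1, e2]
    exact hEineq r hr
  set KK : ℝ := ∫ s in Ioi (0:ℝ), k s with hKinf
  have hKbound : ∀ r : ℝ, 0 ≤ r → (∫ s in Ioc (0:ℝ) r, kx s) ≤ KK := by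
    intro r hr
    have e2 : (∫ s in Ioc (0:ℝ) r, kx s) = ∫ s in Ioc (0:ℝ) r, k s := by
      refine setIntegral_congr_fun measurableSet_Ioc (fun s hs => ?_)
      rw [hkxdef]; simp only [max_eq_left hs.1.le]
    rw [e2, hKinf]
    refine setIntegral_mono_set hki ?_ (HasSubset.Subset.eventuallyLE Ioc_subset_Ioi_self)
    filter_upwards [ae_restrict_mem measurableSet_Ioi] with s hs
    exact hk0 s (mem_Ici.2 (le_of_lt hs))
  refine ⟨2 * Real.exp KK, by positivity, fun r hr => ?_⟩
  have hr0 : (0:ℝ) ≤ r := hr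
  have hfinal : E r ≤ 2 * Real.exp KK * δ := by
    have h1 := hgron r hr0
    have e1 : Ex r = E r := by rw [hExdef]; simp only [max_eq_left hr0]
    rw [e1] at h1
    have h2 : (2 * δ) * Real.exp (∫ s in Ioc (0:ℝ) r, kx s) ≤ (2 * δ) * Real.exp KK :=
      mul_le_mul_of_nonneg_left (Real.exp_le_exp.2 (hKbound r hr0)) (by linarith)
    calc E r ≤ (2 * δ) * Real.exp KK := h1.trans h2
      _ = 2 * Real.exp KK * δ := by ring
  refine le_trans ?_ hfinal
  rw [hEdef]
  exact max_le (le_add_of_nonneg_right (abs_nonneg _)) (le_add_of_nonneg_left (abs_nonneg _))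
end
end
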